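/- arXiv:2002.06052 — 9 statements merged into one kernel-verified Lean document; each statement's English description precedes it below -/
import Mathlib

section
/- For every natural number n ≥ 1, every complex number a, and every complex number λ, the characteristic polynomial of the matrix a·J_n + B_n evaluated at λ satisfies det(λ·I_n − (a·J_n + B_n)) = ((a + i)(λ − i)^n − (a − i)(λ + i)^n)/(2i). -/
/-!
`λ • 1 - (a • J n + B n)` has `λ - a` on the diagonal, `-a - i` above it and `-a + i` below it.
Adding `t • J n` changes the determinant affinely in `t`, since `J n` has rank one. At
`t = a + i` and `t = a - i` the matrix becomes triangular, with determinants `(λ + i) ^ n` and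
`(λ - i) ^ n`; interpolating linearly back to `t = 0` gives the formula.
-/

/-- `J n` is the `n × n` complex matrix all of whose entries equal `1`. -/
def J (n : ℕ) : Matrix (Fin n) (Fin n) ℂ := Matrix.of fun _ _ => 1

/-- `B n` is the `n × n` complex matrix with entries `i` above the diagonal,
`-i` below the diagonal and `0` on the diagonal. -/
def B (n : ℕ) : Matrix (Fin n) (Fin n) ℂ :=
  Matrix.of fun j k => if j < k then Complex.I else if k < j then -Complex.I else 0

namespace Matrix

section RankOne

variable {ι K : Type*} [Fintype ι] [DecidableEq ι] [Field K]

theorem exists_det_add_smul_vecMulVec (A : Matrix ι ι K) (u v : ι → K) :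
    ∃ β : K, ∀ t : K, (A + t • vecMulVec u v).det = A.det + β * t := by
  by_cases hu : u = 0
  · exact ⟨0, fun t => by simp [hu]⟩
  obtain ⟨k, hk⟩ : ∃ k, u k ≠ 0 := by simpa [funext_iff] using hu
  -- Subtracting `u i / u k` times row `k` from each row `i ≠ k` confines `t` to row `k`.
  let R : Matrix ι ι K := of fun i j => if i = k then A i j else A i j - u i / u k * A k j
  have hrow (t : K) :
      (A + t • vecMulVec u v).det = (R.updateRow k (A k + (t * u k) • v)).det := by
    refine det_eq_of_forall_row_eq_smul_add_const (fun i => if i = k then 0 else u i / u k) k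
      (by simp) fun i j => ?_
    by_cases hi : i = k
    · subst hi; simp [vecMulVec_apply, R, mul_comm, mul_left_comm]
    · simp only [add_apply, smul_apply, vecMulVec_apply, smul_eq_mul, hi, updateRow_ne,
        updateRow_self, of_apply, if_false, Pi.add_apply, Pi.smul_apply, R, Ne, not_false_eq_true]
      field_simp
      ring
  refine ⟨u k * (R.updateRow k v).det, fun t => ?_⟩
  have h0 := hrow 0
  simp only [zero_smul, add_zero, zero_mul] at h0
  rw [hrow, det_updateRow_add, det_updateRow_smul, ← h0]
  ring

end RankOne

section ConstTriangles

variable {ι R : Type*} [LinearOrder ι]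

def ofDiagConstTriangles (d : ι → R) (b c : R) : Matrix ι ι R :=
  of fun i j => if i = j then d i else if i < j then b else c

theorem ofDiagConstTriangles_add_smul_vecMulVec_one [Semiring R] (d : ι → R) (b c t : R) :
    ofDiagConstTriangles d b c + t • vecMulVec 1 1 =
      ofDiagConstTriangles (fun i => d i + t) (b + t) (c + t) := by
  ext i j
  simp only [ofDiagConstTriangles, add_apply, smul_apply, vecMulVec_apply, of_apply]
  split_ifs <;> simp

variable [Fintype ι]

theorem det_ofDiagConstTriangles_zero_left [CommRing R] (d : ι → R) (c : R) :
    (ofDiagConstTriangles d 0 c).det = ∏ i, d i := by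
  rw [det_of_isLowerTriangular]
  · simp [ofDiagConstTriangles]
  · intro i j (hij : i < j)
    simp [ofDiagConstTriangles, hij.ne, hij]

theorem det_ofDiagConstTriangles_zero_right [CommRing R] (d : ι → R) (b : R) :
    (ofDiagConstTriangles d b 0).det = ∏ i, d i := by
  rw [det_of_isUpperTriangular]
  · simp [ofDiagConstTriangles]
  · intro i j (hij : j < i)
    simp [ofDiagConstTriangles, hij.ne', hij.not_gt]

theorem det_ofDiagConstTriangles {K : Type*} [Field K] (d : ι → K) {b c : K} (hbc : b ≠ c) :
    (ofDiagConstTriangles d b c).det =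
      (b * ∏ i, (d i - c) - c * ∏ i, (d i - b)) / (b - c) := by
  obtain ⟨β, hβ⟩ := exists_det_add_smul_vecMulVec (ofDiagConstTriangles d b c) 1 1
  have hb := hβ (-b)
  have hc := hβ (-c)
  rw [ofDiagConstTriangles_add_smul_vecMulVec_one, add_neg_cancel,
    det_ofDiagConstTriangles_zero_left] at hb
  rw [ofDiagConstTriangles_add_smul_vecMulVec_one, add_neg_cancel,
    det_ofDiagConstTriangles_zero_right] at hc
  rw [eq_div_iff (sub_ne_zero.2 hbc)]
  simp only [← sub_eq_add_neg] at hb hc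
  linear_combination c * hb - b * hc

end ConstTriangles

end Matrix

theorem stmt_0_general (n : ℕ) (a lam : ℂ) :
    Matrix.det (lam • (1 : Matrix (Fin n) (Fin n) ℂ) - (a • J n + B n)) =
      ((a + Complex.I) * (lam - Complex.I) ^ n - (a - Complex.I) * (lam + Complex.I) ^ n) /
        (2 * Complex.I) := by
  have hM : lam • (1 : Matrix (Fin n) (Fin n) ℂ) - (a • J n + B n) =
      Matrix.ofDiagConstTriangles (fun _ => lam - a) (-a - Complex.I) (-a + Complex.I) := by
    ext i j
    simp only [J, B, Matrix.ofDiagConstTriangles, Matrix.sub_apply, Matrix.add_apply,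
      Matrix.smul_apply, Matrix.one_apply, Matrix.of_apply]
    rcases lt_trichotomy i j with h | rfl | h
    · simp [h, h.ne, sub_eq_add_neg, add_comm]
    · simp
    · simp [h, h.ne', h.not_gt, add_comm]
  have hbc : -a - Complex.I ≠ -a + Complex.I := fun h => Complex.I_ne_zero <| by
    linear_combination (-1 / 2 : ℂ) * h
  rw [hM, Matrix.det_ofDiagConstTriangles _ hbc]
  simp only [Finset.prod_const, Finset.card_univ, Fintype.card_fin]
  field_simp
  ring

theorem stmt_0 (n : ℕ) (hn : 1 ≤ n) (a lam : ℂ) :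
    Matrix.det (lam • (1 : Matrix (Fin n) (Fin n) ℂ) - (a • J n + B n)) =
      ((a + Complex.I) * (lam - Complex.I) ^ n - (a - Complex.I) * (lam + Complex.I) ^ n) /
        (2 * Complex.I) :=
  stmt_0_general n a lam
end

section
/- For every natural number n ≥ 2 and all complex numbers a and λ, the characteristic polynomials χ_n(λ) = det(λ·I_n − (a·J_n + B_n)) satisfy the three-term recurrence χ_n(λ) = 2λ·χ_{n−1}(λ) − (λ² + 1)·χ_{n−2}(λ), with χ_0(λ) = 1 and χ_1(λ) = λ − a. -/
/-- The characteristic polynomial of `a • J n + B n` evaluated at `lam`. -/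
def chi (a lam : ℂ) (n : ℕ) : ℂ :=
  Matrix.det (lam • (1 : Matrix (Fin n) (Fin n) ℂ) - (a • J n + B n))

namespace Stmt1Aux

/-- The matrix whose determinant is `chi a lam n`. -/
def Mm (a lam : ℂ) (n : ℕ) : Matrix (Fin n) (Fin n) ℂ :=
  Matrix.of fun j k =>
    if (j : ℕ) < k then -(a + Complex.I)
    else if (k : ℕ) < j then Complex.I - a
    else lam - a

/-- Auxiliary matrix: like `Mm` but with the `(0,0)` entry replaced by `I - a`. -/
def Fm (a lam : ℂ) (n : ℕ) : Matrix (Fin n) (Fin n) ℂ :=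
  Matrix.of fun j k =>
    if (j : ℕ) < k then -(a + Complex.I)
    else if (k : ℕ) < j then Complex.I - a
    else if (j : ℕ) = 0 then Complex.I - a
    else lam - a

lemma chi_eq (a lam : ℂ) (n : ℕ) : chi a lam n = (Mm a lam n).det := by
  unfold chi
  congr 1
  ext j k
  simp only [Matrix.sub_apply, Matrix.add_apply, Matrix.smul_apply, Matrix.one_apply,
    smul_eq_mul, J, B, Mm, Matrix.of_apply, Fin.lt_def, Fin.ext_iff, mul_one]
  split_ifs <;> first | ring1 | (exfalso; omega)

lemma succAbove_one_val (n : ℕ) (k : Fin (n+1)) :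
    (((1 : Fin (n+2)).succAbove k) : ℕ) = if (k:ℕ) = 0 then 0 else (k:ℕ)+1 := by
  rcases k with ⟨kv, hk⟩
  simp [Fin.succAbove, Fin.lt_def]
  split_ifs with h <;> simp [h]

lemma minorFF (a lam : ℂ) (n : ℕ) :
    (Fm a lam (n+2)).submatrix Fin.succ ((1 : Fin (n+2)).succAbove) = Fm a lam (n+1) := by
  ext j k
  have hs := succAbove_one_val n k
  by_cases hk : (k : ℕ) = 0
  · rw [if_pos hk] at hs
    simp only [Matrix.submatrix_apply, Fm, Matrix.of_apply, Fin.val_succ, hs, hk]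
    split_ifs <;> first | rfl | omega | exact (‹False›).elim
  · rw [if_neg hk] at hs
    simp only [Matrix.submatrix_apply, Fm, Matrix.of_apply, Fin.val_succ, hs]
    split_ifs <;> first | rfl | omega | exact (‹False›).elim

lemma minorMF (a lam : ℂ) (n : ℕ) :
    (Mm a lam (n+2)).submatrix Fin.succ ((1 : Fin (n+2)).succAbove) = Fm a lam (n+1) := by
  ext j k
  have hs := succAbove_one_val n k
  by_cases hk : (k : ℕ) = 0
  · rw [if_pos hk] at hs
    simp only [Matrix.submatrix_apply, Mm, Fm, Matrix.of_apply, Fin.val_succ, hs, hk]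
    split_ifs <;> first | rfl | omega | exact (‹False›).elim
  · rw [if_neg hk] at hs
    simp only [Matrix.submatrix_apply, Mm, Fm, Matrix.of_apply, Fin.val_succ, hs]
    split_ifs <;> first | rfl | omega | exact (‹False›).elim

lemma minorMM (a lam : ℂ) (n : ℕ) :
    (Mm a lam (n+2)).submatrix Fin.succ ((0 : Fin (n+2)).succAbove) = Mm a lam (n+1) := by
  ext j k
  simp only [Matrix.submatrix_apply, Mm, Matrix.of_apply, Fin.succAbove_zero, Fin.val_succ]
  split_ifs <;> first | rfl | omega | exact (‹False›).elim

section Step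

variable (a lam : ℂ) (n : ℕ)

lemma Fm_step :
    (Fm a lam (n+2)).det = (lam + Complex.I) * (Fm a lam (n+1)).det := by
  have h01 : (0 : Fin (n+2)) ≠ 1 := by simp [Fin.ext_iff]
  rw [← Matrix.det_updateRow_add_smul_self (Fm a lam (n+2)) h01 (-1)]
  set A := Matrix.updateRow (Fm a lam (n+2)) 0
      (Fm a lam (n+2) 0 + (-1 : ℂ) • Fm a lam (n+2) 1) with hA
  have hrow : ∀ k : Fin (n+2), A 0 k = Fm a lam (n+2) 0 k - Fm a lam (n+2) 1 k := by
    intro k; simp [hA, sub_eq_add_neg]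
  have h00 : A 0 0 = 0 := by rw [hrow]; simp [Fm]
  have h01v : A 0 1 = -(a + Complex.I) - (lam - a) := by
    rw [hrow]
    have e0 : ((0 : Fin (n+2)) : ℕ) = 0 := rfl
    have e1 : ((1 : Fin (n+2)) : ℕ) = 1 := rfl
    simp only [Fm, Matrix.of_apply]
    rw [e0, e1] <;> norm_num
  have htail : ∀ j : Fin n, A 0 j.succ.succ = 0 := by
    intro j
    rw [hrow]
    have h2 : ((j.succ.succ : Fin (n+2)) : ℕ) = (j:ℕ) + 2 := rfl
    simp only [Fm, Matrix.of_apply, h2, Fin.val_zero, Fin.val_one]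
    rw [if_pos (by omega), if_pos (by omega)]
    ring
  have hsub : ∀ σ : Fin (n+1) → Fin (n+2),
      A.submatrix Fin.succ σ = (Fm a lam (n+2)).submatrix Fin.succ σ := by
    intro σ; ext j k
    simp [hA, Matrix.updateRow_ne (Fin.succ_ne_zero j)]
  have hzero : ∀ j : Fin n, (-1 : ℂ) ^ ((j.succ.succ : Fin (n+2)) : ℕ) * A 0 j.succ.succ *
      (A.submatrix Fin.succ ((j.succ.succ : Fin (n+2)).succAbove)).det = 0 := by
    intro j; rw [htail]; ring
  rw [Matrix.det_succ_row_zero, Fin.sum_univ_succ, Fin.sum_univ_succ,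
    Finset.sum_congr rfl (fun j _ => hzero j), Finset.sum_const, smul_zero, add_zero,
    show (Fin.succ (0 : Fin (n+1))) = (1 : Fin (n+2)) from rfl,
    h00, h01v, hsub, hsub, minorFF]
  simp only [Fin.val_zero, Fin.val_one, pow_zero, pow_one, one_mul]
  ring

lemma Mm_step :
    (Mm a lam (n+2)).det =
      (lam - Complex.I) * (Mm a lam (n+1)).det
        + (lam + Complex.I) * (Fm a lam (n+1)).det := by
  have h01 : (0 : Fin (n+2)) ≠ 1 := by simp [Fin.ext_iff]
  rw [← Matrix.det_updateRow_add_smul_self (Mm a lam (n+2)) h01 (-1)]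
  set A := Matrix.updateRow (Mm a lam (n+2)) 0
      (Mm a lam (n+2) 0 + (-1 : ℂ) • Mm a lam (n+2) 1) with hA
  have hrow : ∀ k : Fin (n+2), A 0 k = Mm a lam (n+2) 0 k - Mm a lam (n+2) 1 k := by
    intro k; simp [hA, sub_eq_add_neg]
  have h00 : A 0 0 = (lam - a) - (Complex.I - a) := by rw [hrow]; simp [Mm]
  have h01v : A 0 1 = -(a + Complex.I) - (lam - a) := by
    rw [hrow]
    have e0 : ((0 : Fin (n+2)) : ℕ) = 0 := rfl
    have e1 : ((1 : Fin (n+2)) : ℕ) = 1 := rfl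
    simp only [Mm, Matrix.of_apply]
    rw [e0, e1] <;> norm_num
  have htail : ∀ j : Fin n, A 0 j.succ.succ = 0 := by
    intro j
    rw [hrow]
    have h2 : ((j.succ.succ : Fin (n+2)) : ℕ) = (j:ℕ) + 2 := rfl
    simp only [Mm, Matrix.of_apply, h2, Fin.val_zero, Fin.val_one]
    rw [if_pos (by omega), if_pos (by omega)]
    ring
  have hsub : ∀ σ : Fin (n+1) → Fin (n+2),
      A.submatrix Fin.succ σ = (Mm a lam (n+2)).submatrix Fin.succ σ := by
    intro σ; ext j k
    simp [hA, Matrix.updateRow_ne (Fin.succ_ne_zero j)]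
  have hzero : ∀ j : Fin n, (-1 : ℂ) ^ ((j.succ.succ : Fin (n+2)) : ℕ) * A 0 j.succ.succ *
      (A.submatrix Fin.succ ((j.succ.succ : Fin (n+2)).succAbove)).det = 0 := by
    intro j; rw [htail]; ring
  rw [Matrix.det_succ_row_zero, Fin.sum_univ_succ, Fin.sum_univ_succ,
    Finset.sum_congr rfl (fun j _ => hzero j), Finset.sum_const, smul_zero, add_zero,
    show (Fin.succ (0 : Fin (n+1))) = (1 : Fin (n+2)) from rfl,
    h00, h01v, hsub, hsub, minorMM, minorMF]
  simp only [Fin.val_zero, Fin.val_one, pow_zero, pow_one, one_mul]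
  ring

end Step

lemma Fm_det (a lam : ℂ) : ∀ n : ℕ,
    (Fm a lam (n+1)).det = (Complex.I - a) * (lam + Complex.I) ^ n := by
  intro n
  induction n with
  | zero => rw [Matrix.det_fin_one]; simp [Fm]
  | succ m ih => rw [Fm_step, ih]; ring

lemma Mm_det_step (a lam : ℂ) : ∀ n : ℕ,
    (Mm a lam (n+1)).det =
      (lam - Complex.I) * (Mm a lam n).det + (Complex.I - a) * (lam + Complex.I) ^ n := by
  intro n
  cases n with
  | zero =>
    rw [Matrix.det_fin_one]
    simp [Mm, Matrix.det_fin_zero]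
  | succ m =>
    rw [Mm_step, Fm_det]
    ring

end Stmt1Aux

open Stmt1Aux in
theorem stmt_1 (a lam : ℂ) :
    (∀ n : ℕ, 2 ≤ n →
        chi a lam n = 2 * lam * chi a lam (n - 1) - (lam ^ 2 + 1) * chi a lam (n - 2)) ∧
      chi a lam 0 = 1 ∧ chi a lam 1 = lam - a := by
  refine ⟨?_, ?_, ?_⟩
  · intro n hn
    obtain ⟨m, rfl⟩ : ∃ m, n = m + 2 := ⟨n - 2, by omega⟩
    have e1 : m + 2 - 1 = m + 1 := by omega
    have e2 : m + 2 - 2 = m := by omega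
    rw [e1, e2, chi_eq, chi_eq, chi_eq]
    have h2 := Mm_det_step a lam (m+1)
    have h1 := Mm_det_step a lam m
    have hI : Complex.I ^ 2 = -1 := Complex.I_sq
    linear_combination h2 - (lam + Complex.I) * h1 + (Mm a lam m).det * hI
  · rw [chi_eq, Matrix.det_fin_zero]
  · rw [chi_eq, Matrix.det_fin_one]
    simp [Mm]
end

section
/- For all natural numbers m ≥ 1 and n ≥ 1 and every real α with 0 < α < π, the cotangent power sum S(m, n, α) = Σ_{k=0}^{n−1} cot^m((α + kπ)/n) equals the trace of the m-th power of the matrix cot α·J_n + B_n, i.e. Σ_{k=0}^{n−1} cot^m((α + kπ)/n) = Tr((cot α·J_n + B_n)^m). -/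
/-!
Write `θ_k = (α + kπ)/n` and `r_k = e^{-2iθ_k}`, so that `cot θ_k = -i (r_k + 1)/(r_k - 1)`.
Since `r_k^n = e^{-2iα}`, the `j`-th entry of `(cot α • J + B) (r_k^j)_j` is a sum of two
geometric sums that collapses to `cot θ_k · r_k^j`: the vectors `(r_k^j)_j` are eigenvectors with
eigenvalues `cot θ_k`. The `r_k` are `e^{-2iα/n}` times the distinct `n`-th roots of unity, so
the Vandermonde matrix they form is invertible and diagonalises `cot α • J + B`.
-/

open Complex (I)
open Finset
open scoped Matrix Real

theorem Matrix.trace_pow_eq_of_mul_eq_mul {ι R : Type*} [Fintype ι] [DecidableEq ι] [CommRing R]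
    {M V D : Matrix ι ι R} (hV : IsUnit V) (h : M * V = V * D) (m : ℕ) :
    (M ^ m).trace = (D ^ m).trace := by
  have hpow : M ^ m * V = V * D ^ m := ((SemiconjBy.pow_right h.symm m).eq).symm
  have hdet : IsUnit V.det := (Matrix.isUnit_iff_isUnit_det V).mp hV
  rw [← Matrix.trace_conj hV (D ^ m), ← hpow, Matrix.mul_nonsing_inv_cancel_right _ _ hdet]

theorem smul_J_add_B_mulVec_geom {n : ℕ} {c t r : ℂ}
    (hc : c * (r ^ n - 1) = -I * (r ^ n + 1)) (ht : t * (r - 1) = -I * (r + 1)) :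
    (c • J n + B n) *ᵥ (fun j => r ^ (j : ℕ)) = t • fun j : Fin n => r ^ (j : ℕ) := by
  have hr : r - 1 ≠ 0 := by
    rintro h
    rw [h, sub_eq_zero.mp h] at ht
    norm_num at ht
  funext j
  set f : ℕ → ℂ := fun l => (c + if (j : ℕ) < l then I else if l < j then -I else 0) * r ^ l
  have hj : (j : ℕ) + 1 ≤ n := j.isLt
  have hlow : ∑ l ∈ range j, f l = (c - I) * ∑ l ∈ range j, r ^ l := by
    rw [mul_sum]
    refine sum_congr rfl fun l hl => ?_
    rw [mem_range] at hl
    simp only [f, if_neg hl.not_gt, if_pos hl, sub_eq_add_neg]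
  have hhigh :
      ∑ l ∈ Ico ((j : ℕ) + 1) n, f l = (c + I) * ∑ l ∈ Ico ((j : ℕ) + 1) n, r ^ l := by
    rw [mul_sum]
    refine sum_congr rfl fun l hl => ?_
    rw [mem_Ico] at hl
    simp only [f, if_pos (Nat.lt_of_succ_le hl.1)]
  have hentry : ((c • J n + B n) *ᵥ fun j => r ^ (j : ℕ)) j = ∑ l ∈ range n, f l := by
    rw [← Fin.sum_univ_eq_sum_range]
    simp only [Matrix.mulVec, dotProduct, Matrix.add_apply, Matrix.smul_apply, J, B,
      Matrix.of_apply, smul_eq_mul, mul_one, Fin.lt_def, f]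
  rw [hentry, ← sum_range_add_sum_Ico _ hj, sum_range_succ, hlow, hhigh]
  refine mul_right_cancel₀ hr ?_
  simp only [f, lt_irrefl, if_false, add_zero, Pi.smul_apply, smul_eq_mul]
  linear_combination (c - I) * geom_sum_mul r j + (c + I) * geom_sum_Ico_mul r hj + hc
    - r ^ (j : ℕ) * ht

theorem trace_pow_smul_J_add_B {n : ℕ} {c : ℂ} {r t : Fin n → ℂ} (hr : Function.Injective r)
    (hc : ∀ k, c * (r k ^ n - 1) = -I * (r k ^ n + 1))
    (ht : ∀ k, t k * (r k - 1) = -I * (r k + 1)) (m : ℕ) :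
    ((c • J n + B n) ^ m).trace = ∑ k, t k ^ m := by
  set V := (Matrix.vandermonde r)ᵀ
  have hV : IsUnit V := by
    rw [Matrix.isUnit_iff_isUnit_det, Matrix.det_transpose, isUnit_iff_ne_zero]
    exact Matrix.det_vandermonde_ne_zero_iff.mpr hr
  have hMV : (c • J n + B n) * V = V * Matrix.diagonal t := by
    ext j k
    rw [Matrix.mul_diagonal]
    have := congrFun (smul_J_add_B_mulVec_geom (hc k) (ht k)) j
    simpa [V, Matrix.mul_apply, Matrix.mulVec, dotProduct, mul_comm] using this
  rw [Matrix.trace_pow_eq_of_mul_eq_mul hV hMV, Matrix.diagonal_pow, Matrix.trace_diagonal]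
  rfl

theorem ofReal_cot_mul_exp_sub_one {β : ℝ} (h : Real.sin β ≠ 0) :
    (Real.cot β : ℂ) * (Complex.exp (-(2 * β) * I) - 1) =
      -I * (Complex.exp (-(2 * β) * I) + 1) := by
  have h' : Complex.sin β ≠ 0 := mod_cast h
  rw [Real.cot_eq_cos_div_sin, Complex.exp_mul_I, Complex.cos_neg, Complex.sin_neg,
    Complex.cos_two_mul, Complex.sin_two_mul]
  push_cast
  field_simp
  linear_combination 2 * Complex.cos β * Complex.sin_sq_add_cos_sq (β : ℂ)
    - 2 * Complex.cos β * Complex.sin β ^ 2 * Complex.I_sq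

theorem sin_angle_ne_zero {α : ℝ} (hα : Real.sin α ≠ 0) {n : ℕ} (hn : n ≠ 0) (k : ℕ) :
    Real.sin ((α + k * π) / n) ≠ 0 := by
  rintro h
  obtain ⟨z, hz⟩ := Real.sin_eq_zero_iff.mp h
  have hα' : α = ((z * n - k : ℤ) : ℝ) * π := by
    field_simp at hz
    push_cast
    linarith
  exact hα (hα' ▸ Real.sin_int_mul_pi _)

theorem exp_angle_eq (α : ℝ) {n : ℕ} (hn : n ≠ 0) (k : ℕ) :
    Complex.exp (-(2 * ((α + k * π) / n : ℝ)) * I)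
      = Complex.exp (-(2 * α / n) * I) * (Complex.exp (2 * π * I / n))⁻¹ ^ k := by
  rw [← Complex.exp_neg, ← Complex.exp_nat_mul, ← Complex.exp_add]
  congr 1
  push_cast
  field_simp
  ring

theorem exp_angle_pow (α : ℝ) {n : ℕ} (hn : n ≠ 0) (k : ℕ) :
    Complex.exp (-(2 * ((α + k * π) / n : ℝ)) * I) ^ n = Complex.exp (-(2 * α) * I) := by
  rw [exp_angle_eq α hn, mul_pow, ← pow_mul, mul_comm k, pow_mul, inv_pow,
    (Complex.isPrimitiveRoot_exp n hn).pow_eq_one, inv_one, one_pow, mul_one,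
    ← Complex.exp_nat_mul]
  congr 1
  field_simp

theorem injective_exp_angle (α : ℝ) (n : ℕ) :
    Function.Injective fun k : Fin n =>
      Complex.exp (-(2 * ((α + (k : ℕ) * π) / n : ℝ)) * I) := by
  intro k l hkl
  have hn : n ≠ 0 := k.pos.ne'
  simp only [exp_angle_eq α hn] at hkl
  exact Fin.ext <| (Complex.isPrimitiveRoot_exp n hn).inv.pow_inj k.isLt l.isLt <|
    mul_left_cancel₀ (Complex.exp_ne_zero _) hkl

theorem stmt_4_general (m n : ℕ) (α : ℝ) (hα0 : 0 < α) (hαπ : α < Real.pi) :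
    ((∑ k ∈ Finset.range n, Real.cot ((α + k * Real.pi) / n) ^ m : ℝ) : ℂ) =
      Matrix.trace (((Real.cot α : ℂ) • J n + B n) ^ m) := by
  have hα : Real.sin α ≠ 0 := (Real.sin_pos_of_pos_of_lt_pi hα0 hαπ).ne'
  rw [trace_pow_smul_J_add_B (injective_exp_angle α n)
    (fun k => by rw [exp_angle_pow α k.pos.ne']; exact ofReal_cot_mul_exp_sub_one hα)
    (fun k => ofReal_cot_mul_exp_sub_one (sin_angle_ne_zero hα k.pos.ne' k)) m]
  rw [Complex.ofReal_sum, ← Fin.sum_univ_eq_sum_range]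
  simp only [Complex.ofReal_pow]

theorem stmt_4 (m n : ℕ) (hm : 1 ≤ m) (hn : 1 ≤ n) (α : ℝ) (hα0 : 0 < α) (hαπ : α < Real.pi) :
    ((∑ k ∈ Finset.range n, Real.cot ((α + k * Real.pi) / n) ^ m : ℝ) : ℂ) =
      Matrix.trace (((Real.cot α : ℂ) • J n + B n) ^ m) :=
  stmt_4_general m n α hα0 hαπ
end

section
/- For all natural numbers m ≥ 1 and n ≥ 1, the sums Σ_{k=1}^{n} (−1)^k · cot^{2m−1}((2k−1)π/(4n)) and Σ_{k=1}^{n} cot^{2m}((2k−1)π/(4n)) are integers. -/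
/-!
The numbers `x_k = (-1)^(k+1) cot((2k-1)π/(4n))`, `1 ≤ k ≤ n`, are `cot ψ_k` for
`ψ_k = ±(2k-1)π/(4n)`, and `nψ_k ≡ π/4 (mod π)`. Since `cot ψ + i = e^{iψ} / sin ψ`, the
condition `cos nψ = sin nψ` says that `cot ψ` is a root of
`P_n = ((1 + i)(X + i)^n + (1 - i)(X - i)^n) / 2`, a monic polynomial of degree `n` with integer
coefficients. The `x_k` are distinct, so they are all the roots of `P_n`, and by Newton's identities
their power sums are integers. The two sums of the theorem are, up to sign, the power sums of odd
and of even exponent.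
-/

open Polynomial Finset

theorem Multiset.sum_map_pow_mem_of_esymm_mem {R : Type*} [CommRing R] (S : Subring R)
    (s : Multiset R) (hs : ∀ i, s.esymm i ∈ S) (p : ℕ) : (s.map (· ^ p)).sum ∈ S := by
  classical
  let f : s → R := fun x => (x : R)
  have hesymm (i : ℕ) : MvPolynomial.aeval f (MvPolynomial.esymm s R i) ∈ S := by
    rw [MvPolynomial.aeval_esymm_eq_multiset_esymm, Multiset.map_univ_coe]
    exact hs i
  have hpsum (q : ℕ) : MvPolynomial.aeval f (MvPolynomial.psum s R q) = (s.map (· ^ q)).sum := by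
    rw [MvPolynomial.psum, map_sum, ← Multiset.map_univ_comp_coe]
    simp only [map_pow, MvPolynomial.aeval_X]
    rfl
  rw [← hpsum]
  induction p using Nat.strong_induction_on with
  | _ p ih =>
    rcases p.eq_zero_or_pos with rfl | hp
    · simp
    rw [MvPolynomial.psum_eq_mul_esymm_sub_sum _ _ p hp]
    simp only [map_sub, map_mul, map_sum, map_pow, map_neg, map_one, map_natCast]
    refine sub_mem (mul_mem (mul_mem (pow_mem (neg_mem (one_mem _)) _) (natCast_mem _ _))
      (hesymm p)) (sum_mem fun a ha => ?_)
    simp only [Finset.mem_filter, Finset.HasAntidiagonal.mem_antidiagonal, Set.mem_Ioo] at ha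
    exact mul_mem (mul_mem (pow_mem (neg_mem (one_mem _)) _) (hesymm _)) (ih _ (by omega))

theorem Polynomial.Monic.sum_map_roots_pow_mem {R : Type*} [CommRing R] [IsDomain R]
    (S : Subring R) {P : R[X]} (hP : P.Monic) (hroots : Multiset.card P.roots = P.natDegree)
    (hcoeff : ∀ j, P.coeff j ∈ S) (p : ℕ) : (P.roots.map (· ^ p)).sum ∈ S := by
  refine Multiset.sum_map_pow_mem_of_esymm_mem S _ (fun i => ?_) p
  rcases le_or_gt i P.natDegree with hi | hi
  · have hvieta := coeff_eq_esymm_roots_of_card hroots (Nat.sub_le P.natDegree i)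
    rw [hP.leadingCoeff, one_mul, Nat.sub_sub_self hi] at hvieta
    have : P.roots.esymm i = (-1) ^ i * P.coeff (P.natDegree - i) := by
      rw [hvieta, ← mul_assoc, ← pow_add, Even.neg_one_pow ⟨i, rfl⟩, one_mul]
    rw [this]
    exact mul_mem (pow_mem (neg_mem (one_mem _)) _) (hcoeff _)
  · rw [Multiset.esymm, Multiset.powersetCard_eq_empty _ (hroots ▸ hi)]
    simp

section

open Complex

noncomputable def cotPoly (n : ℕ) : ℂ[X] :=
  C ((1 + I) / 2) * (X + C I) ^ n + C ((1 - I) / 2) * (X - C I) ^ n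

lemma one_add_I_div_two_mul_I_pow_add_mem_bot (t : ℕ) :
    (1 + I) / 2 * I ^ t + (1 - I) / 2 * (-I) ^ t ∈ (⊥ : Subring ℂ) := by
  induction t using Nat.twoStepInduction with
  | zero => convert one_mem (⊥ : Subring ℂ) using 1; ring
  | one => exact Subring.mem_bot.mpr ⟨-1, by push_cast; linear_combination -I_sq⟩
  | more t ih _ =>
    convert neg_mem ih using 1
    linear_combination ((1 + I) / 2 * I ^ t + (1 - I) / 2 * (-I) ^ t) * I_sq

lemma cotPoly_coeff (n j : ℕ) : (cotPoly n).coeff j =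
    ((1 + I) / 2 * I ^ (n - j) + (1 - I) / 2 * (-I) ^ (n - j)) * n.choose j := by
  rw [cotPoly, show (X - C I : ℂ[X]) = X + C (-I) by simp [sub_eq_add_neg], coeff_add,
    coeff_C_mul, coeff_C_mul, coeff_X_add_C_pow, coeff_X_add_C_pow]
  ring

lemma cotPoly_coeff_mem_bot (n j : ℕ) : (cotPoly n).coeff j ∈ (⊥ : Subring ℂ) := by
  rw [cotPoly_coeff]
  exact mul_mem (one_add_I_div_two_mul_I_pow_add_mem_bot _) (natCast_mem _ _)

lemma cotPoly_natDegree_le (n : ℕ) : (cotPoly n).natDegree ≤ n := by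
  refine natDegree_add_le_of_degree_le ?_ ?_ <;>
    refine (natDegree_C_mul_le _ _).trans ?_ <;> simp

lemma cotPoly_coeff_self (n : ℕ) : (cotPoly n).coeff n = 1 := by
  rw [cotPoly_coeff, Nat.sub_self, pow_zero, pow_zero, Nat.choose_self, Nat.cast_one]
  ring

lemma cotPoly_monic (n : ℕ) : (cotPoly n).Monic :=
  monic_of_natDegree_le_of_coeff_eq_one n (cotPoly_natDegree_le n) (cotPoly_coeff_self n)

lemma cotPoly_natDegree (n : ℕ) : (cotPoly n).natDegree = n :=
  natDegree_eq_of_le_of_coeff_ne_zero (cotPoly_natDegree_le n) (by simp [cotPoly_coeff_self])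

lemma cotPoly_eval_cot {n : ℕ} {ψ : ℝ} (hsin : Real.sin ψ ≠ 0)
    (hψ : Real.cos (n * ψ) = Real.sin (n * ψ)) : (cotPoly n).eval (Real.cot ψ : ℂ) = 0 := by
  have hsin' : sin ψ ≠ 0 := by exact_mod_cast hsin
  have hψ' : cos (n * ψ) = sin (n * ψ) := by exact_mod_cast hψ
  have hplus : (Real.cot ψ : ℂ) + I = (cos ψ + sin ψ * I) / sin ψ := by
    rw [ofReal_cot, cot_eq_cos_div_sin]; field_simp
  have hminus : (Real.cot ψ : ℂ) - I = (cos (-ψ) + sin (-ψ) * I) / sin ψ := by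
    rw [ofReal_cot, cot_eq_cos_div_sin, cos_neg, sin_neg]; field_simp; ring
  simp only [cotPoly, eval_add, eval_mul, eval_C, eval_pow, eval_X, eval_sub]
  rw [hplus, hminus, div_pow, div_pow, cos_add_sin_mul_I_pow, cos_add_sin_mul_I_pow, mul_neg,
    cos_neg, sin_neg, hψ']
  linear_combination (sin (n * ψ) / sin ψ ^ n) * I_sq

end

section

open Real

noncomputable def oddAngle (n k : ℕ) : ℝ := (2 * (k : ℝ) - 1) * π / (4 * n)

noncomputable def signedOddAngle (n k : ℕ) : ℝ := (-1) ^ (k + 1) * oddAngle n k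

lemma oddAngle_mem_Ioo {n k : ℕ} (hk : k ∈ Icc 1 n) : oddAngle n k ∈ Set.Ioo 0 (π / 2) := by
  rw [mem_Icc] at hk
  have hk1 : (1 : ℝ) ≤ k := by exact_mod_cast hk.1
  have hkn : (k : ℝ) ≤ n := by exact_mod_cast hk.2
  have hn : (0 : ℝ) < 4 * n := by linarith
  constructor
  · exact div_pos (mul_pos (by linarith) pi_pos) hn
  · rw [oddAngle, div_lt_iff₀ hn]
    nlinarith [pi_pos]

lemma oddAngle_injective {n : ℕ} (hn : n ≠ 0) : Function.Injective (oddAngle n) := by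
  intro a b h
  have : (0 : ℝ) < 4 * n := by positivity
  simp only [oddAngle, div_left_inj' this.ne', mul_left_inj' pi_pos.ne'] at h
  exact_mod_cast (by linarith : (a : ℝ) = b)

lemma abs_signedOddAngle {n k : ℕ} (hk : k ∈ Icc 1 n) :
    |signedOddAngle n k| = oddAngle n k := by
  rw [signedOddAngle, abs_mul, abs_neg_one_pow, one_mul, abs_of_pos (oddAngle_mem_Ioo hk).1]

lemma exists_int_natCast_mul_signedOddAngle {n : ℕ} (hn : n ≠ 0) (k : ℕ) :
    ∃ j : ℤ, n * signedOddAngle n k = π / 4 + j * π := by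
  have hn' : (n : ℝ) ≠ 0 := by exact_mod_cast hn
  rcases Nat.even_or_odd' k with ⟨t, rfl | rfl⟩
  · refine ⟨-t, ?_⟩
    rw [signedOddAngle, oddAngle, pow_succ, (even_two_mul t).neg_one_pow]
    push_cast
    field_simp
    ring
  · refine ⟨t, ?_⟩
    rw [signedOddAngle, oddAngle, show 2 * t + 1 + 1 = 2 * (t + 1) by ring,
      (even_two_mul _).neg_one_pow]
    push_cast
    field_simp
    ring

lemma cos_pi_div_four_add_int_mul_pi (j : ℤ) : cos (π / 4 + j * π) = sin (π / 4 + j * π) := by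
  rw [cos_add_int_mul_pi, sin_add_int_mul_pi, cos_pi_div_four, sin_pi_div_four]

lemma cot_injOn : Set.InjOn cot (Set.Ioo (-(π / 2)) (π / 2)) := by
  intro a ha b hb hab
  refine injOn_tan ha hb (inv_inj.mp ?_)
  simpa only [cot_eq_cos_div_sin, tan_eq_sin_div_cos, inv_div] using hab

lemma cot_neg_one_pow_mul (k : ℕ) (x : ℝ) : cot ((-1) ^ k * x) = (-1) ^ k * cot x := by
  rcases neg_one_pow_eq_or ℝ k with h | h <;>
    simp [h, cot_eq_cos_div_sin, div_neg]

lemma cot_signedOddAngle (n k : ℕ) :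
    cot (signedOddAngle n k) = (-1) ^ (k + 1) * cot (oddAngle n k) :=
  cot_neg_one_pow_mul _ _

lemma signedOddAngle_mem_Ioo {n k : ℕ} (hk : k ∈ Icc 1 n) :
    signedOddAngle n k ∈ Set.Ioo (-(π / 2)) (π / 2) := by
  rw [Set.mem_Ioo, ← abs_lt, abs_signedOddAngle hk]
  exact (oddAngle_mem_Ioo hk).2

lemma sin_signedOddAngle_ne_zero {n k : ℕ} (hk : k ∈ Icc 1 n) :
    sin (signedOddAngle n k) ≠ 0 := by
  obtain ⟨hlow, hupp⟩ := signedOddAngle_mem_Ioo hk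
  rw [Ne, sin_eq_zero_iff_of_lt_of_lt (by linarith [pi_pos]) (by linarith [pi_pos]),
    ← abs_eq_zero, abs_signedOddAngle hk]
  exact (oddAngle_mem_Ioo hk).1.ne'

lemma cos_natCast_mul_signedOddAngle {n : ℕ} (hn : n ≠ 0) (k : ℕ) :
    cos (n * signedOddAngle n k) = sin (n * signedOddAngle n k) := by
  obtain ⟨j, hj⟩ := exists_int_natCast_mul_signedOddAngle hn k
  rw [hj, cos_pi_div_four_add_int_mul_pi]

lemma injOn_cot_signedOddAngle (n : ℕ) :
    Set.InjOn (fun k => cot (signedOddAngle n k)) (Icc 1 n) := by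
  intro a ha b hb hab
  have hψ := cot_injOn (signedOddAngle_mem_Ioo ha) (signedOddAngle_mem_Ioo hb) hab
  refine oddAngle_injective (n := n) (by rw [coe_Icc, Set.mem_Icc] at ha; omega) ?_
  rw [← abs_signedOddAngle ha, ← abs_signedOddAngle hb, hψ]

lemma cotPoly_eval_cot_signedOddAngle {n k : ℕ} (hk : k ∈ Icc 1 n) :
    (cotPoly n).eval (cot (signedOddAngle n k) : ℂ) = 0 :=
  cotPoly_eval_cot (sin_signedOddAngle_ne_zero hk)
    (cos_natCast_mul_signedOddAngle (by rw [mem_Icc] at hk; omega) k)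

theorem exists_int_sum_cot_signedOddAngle_pow (n p : ℕ) :
    ∃ z : ℤ, ∑ k ∈ Icc 1 n, cot (signedOddAngle n k) ^ p = z := by
  let x : ℕ → ℂ := fun k => (cot (signedOddAngle n k) : ℂ)
  have hinj : Set.InjOn x (Icc 1 n) :=
    Complex.ofReal_injective.comp_injOn (injOn_cot_signedOddAngle n)
  have hcard : #((Icc 1 n).image x) = n := by
    rw [card_image_of_injOn hinj, Nat.card_Icc, Nat.add_sub_cancel]
  have hroots : (cotPoly n).roots = ((Icc 1 n).image x).val := by
    refine roots_eq_of_natDegree_le_card_of_ne_zero ?_ (by rw [hcard, cotPoly_natDegree])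
      (cotPoly_monic n).ne_zero
    simp only [mem_image]
    rintro _ ⟨k, hk, rfl⟩
    exact cotPoly_eval_cot_signedOddAngle hk
  have hsum := (cotPoly_monic n).sum_map_roots_pow_mem ⊥
    (by rw [hroots, cotPoly_natDegree, ← card_def, hcard]) (cotPoly_coeff_mem_bot n) p
  rw [hroots, ← sum_eq_multiset_sum, sum_image hinj] at hsum
  obtain ⟨z, hz⟩ := Subring.mem_bot.mp hsum
  refine ⟨z, Complex.ofReal_injective ?_⟩
  simpa only [Complex.ofReal_sum, Complex.ofReal_pow, Complex.ofReal_intCast] using hz.symm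

end

theorem stmt_6_general (m n : ℕ) (hm : 1 ≤ m) :
    (∃ z : ℤ, ∑ k ∈ Finset.Icc 1 n,
        (-1 : ℝ) ^ k * Real.cot ((2 * (k : ℝ) - 1) * Real.pi / (4 * n)) ^ (2 * m - 1) = z) ∧
    (∃ z : ℤ, ∑ k ∈ Finset.Icc 1 n,
        Real.cot ((2 * (k : ℝ) - 1) * Real.pi / (4 * n)) ^ (2 * m) = z) := by
  obtain ⟨z, hz⟩ := exists_int_sum_cot_signedOddAngle_pow n (2 * m - 1)
  obtain ⟨w, hw⟩ := exists_int_sum_cot_signedOddAngle_pow n (2 * m)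
  refine ⟨⟨-z, ?_⟩, ⟨w, ?_⟩⟩
  · have hodd : Odd (2 * m - 1) := ⟨m - 1, by omega⟩
    rw [Int.cast_neg, ← hz, ← sum_neg_distrib]
    refine sum_congr rfl fun k _ => ?_
    rw [cot_signedOddAngle, mul_pow, ← pow_mul, mul_comm (k + 1), pow_mul, hodd.neg_one_pow,
      pow_succ, oddAngle]
    ring
  · rw [← hw]
    refine sum_congr rfl fun k _ => ?_
    rw [cot_signedOddAngle, mul_pow, ← pow_mul, ((even_two_mul m).mul_left _).neg_one_pow,
      one_mul, oddAngle]

theorem stmt_6 (m n : ℕ) (hm : 1 ≤ m) (hn : 1 ≤ n) :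
    (∃ z : ℤ, ∑ k ∈ Finset.Icc 1 n,
        (-1 : ℝ) ^ k * Real.cot ((2 * (k : ℝ) - 1) * Real.pi / (4 * n)) ^ (2 * m - 1) = z) ∧
    (∃ z : ℤ, ∑ k ∈ Finset.Icc 1 n,
        Real.cot ((2 * (k : ℝ) - 1) * Real.pi / (4 * n)) ^ (2 * m) = z) :=
  stmt_6_general m n hm
end

section
/- Let n ≥ 1 be a natural number, let α be real with 0 < α < π, and let z be a real number such that z·cot((α + kπ)/n) ≠ 1 for all 0 ≤ k ≤ n−1 and sin(n·arctan z − α) ≠ 0. Then Σ_{k=0}^{n−1} 1/(1 − z·cot((α + kπ)/n)) = (n/(1 + z²)) · (1 − z·cot(n·arctan z − α)). -/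
/-!
Put `θ = arctan z`, so `z = tan θ`. Each summand is
`1 / (1 - tan θ cot β) = cos θ ^ 2 + sin θ cos θ cot (β - θ)`, and for `β = (α + kπ)/n` one has
`β - θ = (y + kπ)/n` with `y = α - nθ`. The sum therefore reduces to the classical identity
`∑ k < n, cot ((y + kπ)/n) = n cot y`. Writing `cot x = i (e^{2ix} + 1) / (e^{2ix} - 1)` turns that
into the partial-fraction expansion `∑ k < n, 1 / (w ζ^k - 1) = n / (w^n - 1)` over the `n`-th roots
of unity `ζ^k`, which follows by expanding each term as a geometric series and using the
orthogonality `∑ k < n, ζ^(jk) = 0` for `0 < j < n`.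
-/

open Finset Real

namespace IsPrimitiveRoot

variable {K : Type*} [Field K] {n : ℕ} {ζ w : K}

theorem pow_ne_one_of_forall_mul_pow_ne_one (hζ : IsPrimitiveRoot ζ n) (hn : n ≠ 0)
    (hw : ∀ k < n, w * ζ ^ k ≠ 1) : w ^ n ≠ 1 := by
  have : NeZero n := ⟨hn⟩
  intro hwn
  have hw0 : w ≠ 0 := by rintro rfl; exact zero_ne_one ((zero_pow hn).symm.trans hwn)
  obtain ⟨k, hk, hζk⟩ := hζ.eq_pow_of_pow_eq_one (ξ := w⁻¹) (by rw [inv_pow, hwn, inv_one])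
  exact hw k hk (by rw [hζk, mul_inv_cancel₀ hw0])

theorem sum_one_div_mul_pow_sub_one (hζ : IsPrimitiveRoot ζ n) (hw : ∀ k < n, w * ζ ^ k ≠ 1) :
    ∑ k ∈ range n, 1 / (w * ζ ^ k - 1) = n / (w ^ n - 1) := by
  rcases eq_or_ne n 0 with rfl | hn
  · simp
  have hwn : w ^ n - 1 ≠ 0 := sub_ne_zero.2 (hζ.pow_ne_one_of_forall_mul_pow_ne_one hn hw)
  -- `1 / (u - 1) = (∑ j < n, u ^ j) / (u ^ n - 1)` with `u = w ζ ^ k`, so `u ^ n = w ^ n`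
  have hgeom : ∀ k ∈ range n,
      1 / (w * ζ ^ k - 1) = (∑ j ∈ range n, w ^ j * (ζ ^ j) ^ k) / (w ^ n - 1) := by
    intro k hk
    rw [div_eq_div_iff (sub_ne_zero.2 (hw k (mem_range.1 hk))) hwn, one_mul]
    simp_rw [← pow_mul, mul_comm _ k, pow_mul, ← mul_pow]
    rw [geom_sum_mul, mul_pow, ← pow_mul, mul_comm k, pow_mul, hζ.pow_eq_one, one_pow, mul_one]
  have horth : ∀ j ∈ range n, j ≠ 0 → ∑ k ∈ range n, (ζ ^ j) ^ k = 0 := by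
    intro j hj hj0
    have hζj : ζ ^ j ≠ 1 := hζ.pow_ne_one_of_pos_of_lt hj0 (mem_range.1 hj)
    rw [geom_sum_eq hζj, ← pow_mul, mul_comm, pow_mul, hζ.pow_eq_one, one_pow, sub_self,
      zero_div]
  rw [sum_congr rfl hgeom, ← sum_div, sum_comm, sum_eq_single_of_mem 0 (mem_range.2 (by omega))]
  · simp
  · intro j hj hj0
    rw [← mul_sum, horth j hj hj0, mul_zero]

theorem sum_mul_pow_add_one_div_mul_pow_sub_one (hζ : IsPrimitiveRoot ζ n)
    (hw : ∀ k < n, w * ζ ^ k ≠ 1) :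
    ∑ k ∈ range n, (w * ζ ^ k + 1) / (w * ζ ^ k - 1) = n * ((w ^ n + 1) / (w ^ n - 1)) := by
  rcases eq_or_ne n 0 with rfl | hn
  · simp
  have hwn : w ^ n - 1 ≠ 0 := sub_ne_zero.2 (hζ.pow_ne_one_of_forall_mul_pow_ne_one hn hw)
  have hsplit : ∀ k ∈ range n,
      (w * ζ ^ k + 1) / (w * ζ ^ k - 1) = 1 + 2 * (1 / (w * ζ ^ k - 1)) := by
    intro k hk
    have := sub_ne_zero.2 (hw k (mem_range.1 hk))
    field_simp
    ring
  rw [sum_congr rfl hsplit, sum_add_distrib, ← mul_sum, hζ.sum_one_div_mul_pow_sub_one hw]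
  simp only [sum_const, card_range, nsmul_eq_mul, mul_one]
  field_simp
  ring

end IsPrimitiveRoot

namespace Complex

-- Both sides are `0` when `sin z = 0`.
theorem cot_eq_I_mul_exp_add_one_div_exp_sub_one (z : ℂ) :
    cot z = I * (exp (2 * z * I) + 1) / (exp (2 * z * I) - 1) := by
  have hE : exp (z * I) ≠ 0 := exp_ne_zero _
  have hexp : exp (2 * z * I) = exp (z * I) ^ 2 := by rw [← exp_nat_mul]; ring_nf
  have hinv : exp (-z * I) = (exp (z * I))⁻¹ := by rw [← exp_neg]; ring_nf
  have hcos : cos z = (exp (z * I) ^ 2 + 1) / (2 * exp (z * I)) := by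
    rw [cos, hinv]; field_simp
  have hsin : sin z = (1 - exp (z * I) ^ 2) * I / (2 * exp (z * I)) := by
    rw [sin, hinv]; field_simp
  rw [cot_eq_cos_div_sin, hcos, hsin, div_div_div_cancel_right₀ (mul_ne_zero two_ne_zero hE),
    hexp, div_eq_mul_inv, mul_inv, inv_I, ← neg_sub (exp (z * I) ^ 2) 1, inv_neg]
  ring

theorem exp_two_mul_mul_I_ne_one_of_sin_ne_zero {z : ℂ} (h : sin z ≠ 0) :
    exp (2 * z * I) ≠ 1 := by
  rw [Ne, exp_eq_one_iff]
  rintro ⟨k, hk⟩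
  exact h (sin_eq_zero_iff.2
    ⟨k, mul_right_cancel₀ (mul_ne_zero two_ne_zero I_ne_zero) (by linear_combination hk)⟩)

end Complex

namespace Real

theorem sum_cot_add_mul_pi_div (n : ℕ) (y : ℝ) (h : ∀ k < n, sin ((y + k * π) / n) ≠ 0) :
    ∑ k ∈ range n, cot ((y + k * π) / n) = n * cot y := by
  rcases eq_or_ne n 0 with rfl | hn
  · simp
  have hζ := Complex.isPrimitiveRoot_exp n hn
  set ζ := Complex.exp (2 * π * Complex.I / n)
  set w := Complex.exp (2 * (y / n : ℂ) * Complex.I)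
  have hwζ : ∀ k : ℕ, Complex.exp (2 * ((y + k * π) / n : ℂ) * Complex.I) = w * ζ ^ k := by
    intro k
    rw [← Complex.exp_nat_mul, ← Complex.exp_add]
    congr 1
    ring
  have hwn : Complex.exp (2 * y * Complex.I) = w ^ n := by
    rw [← Complex.exp_nat_mul]
    congr 1
    field_simp
  have hw : ∀ k < n, w * ζ ^ k ≠ 1 := fun k hk => by
    rw [← hwζ]
    exact Complex.exp_two_mul_mul_I_ne_one_of_sin_ne_zero (by exact_mod_cast h k hk)
  apply Complex.ofReal_injective
  push_cast [Complex.ofReal_cot]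
  simp_rw [Complex.cot_eq_I_mul_exp_add_one_div_exp_sub_one, hwζ, hwn, mul_div_assoc, ← mul_sum,
    hζ.sum_mul_pow_add_one_div_mul_pow_sub_one hw]
  ring

theorem cot_neg (x : ℝ) : cot (-x) = -cot x := by
  rw [cot_eq_cos_div_sin, cot_eq_cos_div_sin, cos_neg, sin_neg, div_neg]

theorem sin_add_mul_pi_div_pos {α : ℝ} (hα0 : 0 < α) (hαπ : α < π) {n k : ℕ} (hk : k < n) :
    0 < sin ((α + k * π) / n) := by
  have hkn : (k : ℝ) + 1 ≤ n := by exact_mod_cast hk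
  have hn : (0 : ℝ) < n := by linarith [k.cast_nonneg (α := ℝ)]
  refine sin_pos_of_pos_of_lt_pi (by positivity) ?_
  rw [div_lt_iff₀ hn]
  nlinarith [pi_pos]

theorem one_sub_tan_mul_cot {θ β : ℝ} (hθ : cos θ ≠ 0) (hβ : sin β ≠ 0) :
    1 - tan θ * cot β = sin (β - θ) / (cos θ * sin β) := by
  rw [tan_eq_sin_div_cos, cot_eq_cos_div_sin, sin_sub]
  field_simp

theorem sin_sub_ne_zero_of_tan_mul_cot_ne_one {θ β : ℝ} (hθ : cos θ ≠ 0) (hβ : sin β ≠ 0)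
    (h : tan θ * cot β ≠ 1) : sin (β - θ) ≠ 0 := by
  intro h0
  rw [← sub_ne_zero, ← neg_sub, neg_ne_zero, one_sub_tan_mul_cot hθ hβ, h0, zero_div] at h
  exact h rfl

theorem one_div_one_sub_tan_mul_cot {θ β : ℝ} (hθ : cos θ ≠ 0) (hβ : sin β ≠ 0)
    (h : tan θ * cot β ≠ 1) :
    1 / (1 - tan θ * cot β) = cos θ * (cos θ + sin θ * cot (β - θ)) := by
  have hβθ := sin_sub_ne_zero_of_tan_mul_cot_ne_one hθ hβ h
  have hsinβ : sin β = sin (β - θ) * cos θ + cos (β - θ) * sin θ := by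
    rw [← sin_add, sub_add_cancel]
  rw [one_sub_tan_mul_cot hθ hβ, one_div_div, cot_eq_cos_div_sin, hsinβ]
  field_simp

end Real

theorem stmt_7_general (n : ℕ) (α : ℝ) (hα0 : 0 < α) (hαπ : α < Real.pi) (z : ℝ)
    (hz : ∀ k : ℕ, k ≤ n - 1 → z * Real.cot ((α + k * Real.pi) / n) ≠ 1) :
    ∑ k ∈ Finset.range n, 1 / (1 - z * Real.cot ((α + k * Real.pi) / n)) =
      (n / (1 + z ^ 2)) * (1 - z * Real.cot (n * Real.arctan z - α)) := by
  set θ := arctan z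
  have hθ : cos θ ≠ 0 := (cos_arctan_pos z).ne'
  have htan : tan θ = z := tan_arctan z
  have hβ : ∀ k < n, sin ((α + k * π) / n) ≠ 0 := fun k hk =>
    (sin_add_mul_pi_div_pos hα0 hαπ hk).ne'
  have hz' : ∀ k < n, tan θ * cot ((α + k * π) / n) ≠ 1 := fun k hk => htan ▸ hz k (by omega)
  have harg : ∀ k < n, (α + k * π) / n - θ = (α - n * θ + k * π) / n := fun k hk => by
    have : (n : ℝ) ≠ 0 := by exact_mod_cast (by omega : n ≠ 0)
    field_simp
    ring
  have hterm : ∀ k ∈ range n, 1 / (1 - z * cot ((α + k * π) / n)) =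
      cos θ * (cos θ + sin θ * cot ((α - n * θ + k * π) / n)) := fun k hk => by
    rw [mem_range] at hk
    rw [← htan, one_div_one_sub_tan_mul_cot hθ (hβ k hk) (hz' k hk), harg k hk]
  have hsin : ∀ k < n, sin ((α - n * θ + k * π) / n) ≠ 0 := fun k hk =>
    harg k hk ▸ sin_sub_ne_zero_of_tan_mul_cot_ne_one hθ (hβ k hk) (hz' k hk)
  have hsin_θ : sin θ = z * cos θ := by rw [← htan, tan_eq_sin_div_cos, div_mul_cancel₀ _ hθ]
  rw [sum_congr rfl hterm, ← mul_sum, sum_add_distrib, ← mul_sum, sum_const, card_range,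
    sum_cot_add_mul_pi_div n _ hsin, ← neg_sub, cot_neg, hsin_θ, nsmul_eq_mul,
    div_eq_mul_one_div (n : ℝ), ← cos_sq_arctan z]
  ring

theorem stmt_7 (n : ℕ) (hn : 1 ≤ n) (α : ℝ) (hα0 : 0 < α) (hαπ : α < Real.pi) (z : ℝ)
    (hz : ∀ k : ℕ, k ≤ n - 1 → z * Real.cot ((α + k * Real.pi) / n) ≠ 1)
    (hs : Real.sin (n * Real.arctan z - α) ≠ 0) :
    ∑ k ∈ Finset.range n, 1 / (1 - z * Real.cot ((α + k * Real.pi) / n)) =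
      (n / (1 + z ^ 2)) * (1 - z * Real.cot (n * Real.arctan z - α)) :=
  stmt_7_general n α hα0 hαπ z hz
end

section
/- Let n ≥ 1 be a natural number, let α be real with 0 < α < π, and let z be a real number such that sin(n·arctan z − α) ≠ 0. Then (cot α + i)(1 − iz)^n − (cot α − i)(1 + iz)^n ≠ 0 and cot(n·arctan z − α) = −i · ((cot α + i)(1 − iz)^n + (cot α − i)(1 + iz)^n) / ((cot α + i)(1 − iz)^n − (cot α − i)(1 + iz)^n), where the right-hand side is a complex expression whose value is the real number on the left. -/
/-!
With φ = arctan z we have z = tan φ, and both `cot α ± i` and `1 ± i tan φ` are unimodular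
exponentials up to a real factor: `cot α ± i = e^{±iα} / sin α`, `1 ± i tan φ = e^{±iφ} / cos φ`.
Hence the two products are `c e^{∓iθ}` with θ = nφ − α and the same nonzero factor
`c = (sin α cos^n φ)⁻¹`, so their difference is `−2ic sin θ` and their sum `2c cos θ`.
-/

open Complex

namespace Complex

theorem cot_add_I {x : ℂ} (hx : sin x ≠ 0) : cot x + I = exp (x * I) / sin x := by
  rw [cot_eq_cos_div_sin, exp_mul_I]
  field_simp

theorem cot_sub_I {x : ℂ} (hx : sin x ≠ 0) : cot x - I = exp (-x * I) / sin x := by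
  rw [cot_eq_cos_div_sin, exp_mul_I, cos_neg, sin_neg]
  field_simp
  ring

theorem one_add_I_mul_tan {x : ℂ} (hx : cos x ≠ 0) : 1 + I * tan x = exp (x * I) / cos x := by
  rw [tan_eq_sin_div_cos, exp_mul_I]
  field_simp

theorem one_sub_I_mul_tan {x : ℂ} (hx : cos x ≠ 0) : 1 - I * tan x = exp (-x * I) / cos x := by
  rw [tan_eq_sin_div_cos, exp_mul_I, cos_neg, sin_neg]
  field_simp
  ring

theorem mul_exp_neg_mul_I_sub_mul_exp_mul_I (c x : ℂ) :
    c * exp (-x * I) - c * exp (x * I) = -2 * I * c * sin x := by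
  linear_combination (I * c) * two_sin x + c * (exp (-x * I) - exp (x * I)) * I_sq

theorem mul_exp_neg_mul_I_add_mul_exp_mul_I (c x : ℂ) :
    c * exp (-x * I) + c * exp (x * I) = 2 * c * cos x := by
  rw [mul_assoc 2, mul_left_comm 2, two_cos]
  ring

/-- When `sin x = 0`, both sides are the junk value `0` of a division by zero. -/
theorem cot_eq_neg_I_mul_div (c x : ℂ) (hc : c ≠ 0) :
    cot x = -I * (c * exp (-x * I) + c * exp (x * I)) / (c * exp (-x * I) - c * exp (x * I)) := by
  rw [mul_exp_neg_mul_I_add_mul_exp_mul_I, mul_exp_neg_mul_I_sub_mul_exp_mul_I, cot_eq_cos_div_sin]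
  by_cases hx : sin x = 0
  · simp [hx]
  · field_simp

theorem cot_add_I_mul_one_sub_I_mul_tan_pow {α φ : ℂ} (hα : sin α ≠ 0) (hφ : cos φ ≠ 0) (n : ℕ) :
    (cot α + I) * (1 - I * tan φ) ^ n = (sin α * cos φ ^ n)⁻¹ * exp (-(n * φ - α) * I) := by
  rw [cot_add_I hα, one_sub_I_mul_tan hφ, div_pow, ← exp_nat_mul, div_mul_div_comm, ← exp_add,
    div_eq_inv_mul]
  ring_nf

theorem cot_sub_I_mul_one_add_I_mul_tan_pow {α φ : ℂ} (hα : sin α ≠ 0) (hφ : cos φ ≠ 0) (n : ℕ) :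
    (cot α - I) * (1 + I * tan φ) ^ n = (sin α * cos φ ^ n)⁻¹ * exp ((n * φ - α) * I) := by
  rw [cot_sub_I hα, one_add_I_mul_tan hφ, div_pow, ← exp_nat_mul, div_mul_div_comm, ← exp_add,
    div_eq_inv_mul]
  ring_nf

end Complex

theorem stmt_8_general (n : ℕ) (α : ℝ) (hα0 : 0 < α) (hαπ : α < Real.pi) (z : ℝ)
    (hs : Real.sin (n * Real.arctan z - α) ≠ 0) :
    ((Real.cot α : ℂ) + Complex.I) * (1 - Complex.I * z) ^ n -
        ((Real.cot α : ℂ) - Complex.I) * (1 + Complex.I * z) ^ n ≠ 0 ∧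
    ((Real.cot (n * Real.arctan z - α) : ℂ)) =
      -Complex.I *
        (((Real.cot α : ℂ) + Complex.I) * (1 - Complex.I * z) ^ n +
            ((Real.cot α : ℂ) - Complex.I) * (1 + Complex.I * z) ^ n) /
        (((Real.cot α : ℂ) + Complex.I) * (1 - Complex.I * z) ^ n -
            ((Real.cot α : ℂ) - Complex.I) * (1 + Complex.I * z) ^ n) := by
  have hsin : sin α ≠ 0 := by
    exact_mod_cast (Real.sin_pos_of_pos_of_lt_pi hα0 hαπ).ne'
  have hcos : cos (Real.arctan z) ≠ 0 := by
    exact_mod_cast (Real.cos_arctan_pos z).ne'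
  have hz : (z : ℂ) = tan (Real.arctan z) := by rw [← ofReal_tan, Real.tan_arctan]
  have hc : (sin α * cos (Real.arctan z) ^ n)⁻¹ ≠ 0 := inv_ne_zero (mul_ne_zero hsin (pow_ne_zero n hcos))
  rw [ofReal_cot, ofReal_cot, hz, cot_add_I_mul_one_sub_I_mul_tan_pow hsin hcos,
    cot_sub_I_mul_one_add_I_mul_tan_pow hsin hcos]
  simp only [ofReal_sub, ofReal_mul, ofReal_natCast]
  refine ⟨?_, cot_eq_neg_I_mul_div _ _ hc⟩
  rw [mul_exp_neg_mul_I_sub_mul_exp_mul_I]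
  have hsθ : sin (n * Real.arctan z - α) ≠ 0 := by exact_mod_cast hs
  exact mul_ne_zero (mul_ne_zero (mul_ne_zero (by norm_num) I_ne_zero) hc) hsθ

theorem stmt_8 (n : ℕ) (hn : 1 ≤ n) (α : ℝ) (hα0 : 0 < α) (hαπ : α < Real.pi) (z : ℝ)
    (hs : Real.sin (n * Real.arctan z - α) ≠ 0) :
    ((Real.cot α : ℂ) + Complex.I) * (1 - Complex.I * z) ^ n -
        ((Real.cot α : ℂ) - Complex.I) * (1 + Complex.I * z) ^ n ≠ 0 ∧
    ((Real.cot (n * Real.arctan z - α) : ℂ)) =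
      -Complex.I *
        (((Real.cot α : ℂ) + Complex.I) * (1 - Complex.I * z) ^ n +
            ((Real.cot α : ℂ) - Complex.I) * (1 + Complex.I * z) ^ n) /
        (((Real.cot α : ℂ) + Complex.I) * (1 - Complex.I * z) ^ n -
            ((Real.cot α : ℂ) - Complex.I) * (1 + Complex.I * z) ^ n) :=
  stmt_8_general n α hα0 hαπ z hs
end

section
/- Let n ≥ 1 be a natural number and let z be a real number with |z| < tan(π/(2n)). Then the matrix I_n − z·B_n is invertible and z · Tr(J_n · (I_n − z·B_n)^{−1}) = tan(n · arctan z). -/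
namespace Matrix

open Finset

variable {K : Type*} [Field K] {n : ℕ}

def allOnes (ι : Type*) : Matrix ι ι K := of fun _ _ => 1

def signMatrix (n : ℕ) : Matrix (Fin n) (Fin n) K :=
  of fun j k => if j < k then -1 else if k < j then 1 else 0

def strictLowerOnes (n : ℕ) : Matrix (Fin n) (Fin n) K :=
  of fun j k => if k < j then 1 else 0

def geomVec (r : K) : Fin n → K := fun k => r ^ (k : ℕ)

lemma sum_geomVec (r : K) : ∑ k, geomVec (n := n) r k = ∑ k ∈ range n, r ^ k :=
  Fin.sum_univ_eq_sum_range (r ^ ·) n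

lemma strictLowerOnes_mulVec_geomVec (r : K) (j : Fin n) :
    (strictLowerOnes n *ᵥ geomVec r) j = ∑ k ∈ range j, r ^ k := by
  simp only [mulVec, dotProduct, strictLowerOnes, geomVec, of_apply, ite_mul, one_mul, zero_mul,
    Fin.lt_def]
  rw [Fin.sum_univ_eq_sum_range (fun k => if k < (j : ℕ) then r ^ k else 0), ← sum_filter]
  congr 1
  ext k
  simp only [mem_filter, mem_range]
  omega

lemma det_smul_one_add_smul_strictLowerOnes (a b : K) :
    det (a • 1 + b • strictLowerOnes n) = a ^ n := by
  rw [det_of_isLowerTriangular]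
  · simp [strictLowerOnes]
  · intro j k (h : j < k)
    simp [strictLowerOnes, one_apply_ne h.ne, h.not_gt]

lemma one_add_smul_signMatrix_eq_sub (c : K) :
    (1 : Matrix (Fin n) (Fin n) K) + c • signMatrix n =
      (1 + c) • 1 + (2 * c) • strictLowerOnes n - c • allOnes (Fin n) := by
  ext j k
  simp only [signMatrix, strictLowerOnes, allOnes, Matrix.add_apply, Matrix.sub_apply,
    Matrix.smul_apply, one_apply, of_apply, smul_eq_mul]
  rcases lt_trichotomy j k with h | rfl | h
  · simp [h, h.ne, h.not_gt]
  · simp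
  · simp [h, h.ne', h.not_gt]; ring

lemma trace_allOnes_mul_inv {ι : Type*} [Fintype ι] [DecidableEq ι] {A : Matrix ι ι K}
    (hA : IsUnit A) {v : ι → K} {κ : K} (hκ : κ ≠ 0) (hv : A *ᵥ v = fun _ => κ) :
    trace (allOnes ι * A⁻¹) = (∑ i, v i) / κ := by
  rw [eq_div_iff hκ]
  calc trace (allOnes ι * A⁻¹) * κ = ∑ i, (A⁻¹ *ᵥ fun _ => κ) i := by
        simp [trace, allOnes, Matrix.mul_apply, mulVec, dotProduct, sum_mul]
        exact sum_comm
    _ = ∑ i, v i := by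
        rw [← hv, mulVec_mulVec, nonsing_inv_mul _ ((isUnit_iff_isUnit_det A).mp hA), one_mulVec]

section

variable {c r : K}

lemma two_mul_mul_geom_sum (hr : (1 + c) * r = 1 - c) (m : ℕ) :
    2 * c * ∑ k ∈ range m, r ^ k = (1 + c) * (1 - r ^ m) := by
  linear_combination (∑ k ∈ range m, r ^ k) * hr - (1 + c) * geom_sum_mul r m

lemma smul_one_add_smul_strictLowerOnes_mulVec_geomVec (hr : (1 + c) * r = 1 - c) :
    ((1 + c) • 1 + (2 * c) • strictLowerOnes n) *ᵥ geomVec r = fun _ => 1 + c := by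
  ext j
  simp only [add_mulVec, smul_mulVec, one_mulVec, Pi.add_apply, Pi.smul_apply,
    strictLowerOnes_mulVec_geomVec, smul_eq_mul, two_mul_mul_geom_sum hr, geomVec]
  ring

lemma one_add_smul_signMatrix_mulVec_geomVec (hr : (1 + c) * r = 1 - c) :
    (1 + c • signMatrix n) *ᵥ geomVec r = fun _ => 1 + c - c * ∑ k ∈ range n, r ^ k := by
  rw [one_add_smul_signMatrix_eq_sub, sub_mulVec,
    smul_one_add_smul_strictLowerOnes_mulVec_geomVec hr]
  ext j
  simp [allOnes, mulVec, dotProduct, ← mul_sum, sum_geomVec]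

lemma one_add_smul_signMatrix_eq_mul (hb : 1 + c ≠ 0) (hr : (1 + c) * r = 1 - c) :
    (1 : Matrix (Fin n) (Fin n) K) + c • signMatrix n =
      ((1 + c) • 1 + (2 * c) • strictLowerOnes n) *
        (1 + replicateCol Unit (-(c / (1 + c)) • geomVec r) *
          replicateRow Unit (1 : Fin n → K)) := by
  rw [mul_add, mul_one, ← Matrix.mul_assoc, ← replicateCol_mulVec, mulVec_smul,
    smul_one_add_smul_strictLowerOnes_mulVec_geomVec hr, one_add_smul_signMatrix_eq_sub,
    sub_eq_add_neg]
  congr 1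
  ext j k
  simp [allOnes, Matrix.mul_apply]
  field_simp

lemma two_mul_det_one_add_smul_signMatrix (hb : 1 + c ≠ 0) (hr : (1 + c) * r = 1 - c) :
    2 * det ((1 : Matrix (Fin n) (Fin n) K) + c • signMatrix n) = (1 + c) ^ n * (1 + r ^ n) := by
  rw [one_add_smul_signMatrix_eq_mul hb hr, det_mul, det_smul_one_add_smul_strictLowerOnes,
    det_one_add_replicateCol_mul_replicateRow]
  simp only [dotProduct_smul, one_dotProduct, sum_geomVec, smul_eq_mul]
  field_simp
  linear_combination -two_mul_mul_geom_sum hr n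

lemma isUnit_one_add_smul_signMatrix (hb : 1 + c ≠ 0) (hr : (1 + c) * r = 1 - c)
    (hrn : 1 + r ^ n ≠ 0) : IsUnit ((1 : Matrix (Fin n) (Fin n) K) + c • signMatrix n) := by
  rw [isUnit_iff_isUnit_det, isUnit_iff_ne_zero]
  intro h
  have := two_mul_det_one_add_smul_signMatrix (n := n) hb hr
  rw [h, mul_zero, eq_comm] at this
  exact mul_ne_zero (pow_ne_zero n hb) hrn this

lemma mul_trace_allOnes_mul_inv_one_add_smul_signMatrix (hb : 1 + c ≠ 0)
    (hr : (1 + c) * r = 1 - c) (hrn : 1 + r ^ n ≠ 0) :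
    c * trace (allOnes (Fin n) * ((1 : Matrix (Fin n) (Fin n) K) + c • signMatrix n)⁻¹) =
      (1 - r ^ n) / (1 + r ^ n) := by
  have hsum := two_mul_mul_geom_sum hr n
  have hκ : 1 + c - c * ∑ k ∈ range n, r ^ k ≠ 0 := fun h =>
    mul_ne_zero hb hrn (by linear_combination 2 * h + hsum)
  rw [trace_allOnes_mul_inv (isUnit_one_add_smul_signMatrix hb hr hrn) hκ
    (one_add_smul_signMatrix_mulVec_geomVec hr), sum_geomVec, mul_div_assoc',
    div_eq_div_iff hκ hrn]
  linear_combination hsum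

end

end Matrix

namespace Complex

lemma div_pow_mul_cos_add_sin_mul_I {θ : ℂ} (hθ : cos θ ≠ 0) (n : ℕ) :
    ((1 - I * tan θ) / (1 + I * tan θ)) ^ n * (cos (n * θ) + sin (n * θ) * I) =
      cos (n * θ) - sin (n * θ) * I := by
  have hplus : (1 + I * tan θ) * cos θ = cos θ + sin θ * I := by
    rw [tan_eq_sin_div_cos]; field_simp
  have hminus : (1 - I * tan θ) * cos θ = cos (-θ) + sin (-θ) * I := by
    rw [tan_eq_sin_div_cos, cos_neg, sin_neg]; field_simp; ring
  have hne : 1 + I * tan θ ≠ 0 := by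
    intro h
    rw [h, zero_mul, ← exp_mul_I] at hplus
    exact exp_ne_zero _ hplus.symm
  have hratio :
      (1 - I * tan θ) / (1 + I * tan θ) * (cos θ + sin θ * I) = cos (-θ) + sin (-θ) * I := by
    rw [← hplus, ← hminus]; field_simp
  rw [← cos_add_sin_mul_I_pow, ← mul_pow, hratio, cos_add_sin_mul_I_pow, mul_neg, cos_neg,
    sin_neg]
  ring

section

variable {φ w : ℂ}

lemma one_add_ne_zero_of_mul_cos_add_sin_mul_I (hφ : cos φ ≠ 0)
    (hw : w * (cos φ + sin φ * I) = cos φ - sin φ * I) : 1 + w ≠ 0 := by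
  intro h
  have hsum : (1 + w) * (cos φ + sin φ * I) = 2 * cos φ := by linear_combination hw
  rw [h, zero_mul] at hsum
  exact hφ (by linear_combination -hsum / 2)

lemma I_mul_tan_eq_of_mul_cos_add_sin_mul_I (hφ : cos φ ≠ 0)
    (hw : w * (cos φ + sin φ * I) = cos φ - sin φ * I) : I * tan φ = (1 - w) / (1 + w) := by
  have hu : cos φ + sin φ * I ≠ 0 := by rw [← exp_mul_I]; exact exp_ne_zero _
  rw [tan_eq_sin_div_cos, mul_div_assoc',
    div_eq_div_iff hφ (one_add_ne_zero_of_mul_cos_add_sin_mul_I hφ hw)]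
  apply mul_right_cancel₀ hu
  linear_combination (I * sin φ + cos φ) * hw

end

end Complex

open Real in
lemma abs_nat_mul_arctan_lt_pi_div_two {n : ℕ} {z : ℝ} (hz : |z| < tan (π / (2 * n))) :
    |n * arctan z| < π / 2 := by
  rcases n with _ | _ | n
  · simp [pi_pos]
  · -- `tan (π / 2) = 0` in Mathlib, so for `n = 1` the hypothesis cannot hold.
    norm_num [tan_pi_div_two] at hz
    exact absurd hz (abs_nonneg z).not_gt
  · set t := π / (2 * ((n + 2 : ℕ) : ℝ))
    have ht : t < π / 2 := by
      apply div_lt_div_of_pos_left pi_pos two_pos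
      push_cast
      linarith
    have harctan : |arctan z| < t := by
      have htt : arctan (tan t) = t := arctan_tan (by linarith [show 0 < t by positivity]) ht
      rw [abs_lt] at hz ⊢
      constructor
      · rw [← htt, ← arctan_neg]; exact arctan_strictMono hz.1
      · rw [← htt]; exact arctan_strictMono hz.2
    calc |((n + 2 : ℕ) : ℝ) * arctan z| = ((n + 2 : ℕ) : ℝ) * |arctan z| := by
          rw [abs_mul, Nat.abs_cast]
      _ < ((n + 2 : ℕ) : ℝ) * t := by gcongr
      _ = π / 2 := by simp only [t]; field_simp

lemma B_eq_neg_I_smul_signMatrix (n : ℕ) : B n = -Complex.I • Matrix.signMatrix n := by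
  ext j k
  simp only [B, Matrix.signMatrix, Matrix.of_apply, Matrix.smul_apply, smul_eq_mul]
  split_ifs <;> ring

theorem stmt_9_general (n : ℕ) (z : ℝ) (hz : |z| < Real.tan (Real.pi / (2 * n))) :
    IsUnit ((1 : Matrix (Fin n) (Fin n) ℂ) - (z : ℂ) • B n) ∧
    (z : ℂ) * Matrix.trace (J n * ((1 : Matrix (Fin n) (Fin n) ℂ) - (z : ℂ) • B n)⁻¹) =
      (Real.tan (n * Real.arctan z) : ℂ) := by
  have hθ : Complex.cos (Real.arctan z) ≠ 0 := by
    exact_mod_cast (Real.cos_arctan_pos z).ne'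
  have hnθ : Complex.cos (n * Real.arctan z) ≠ 0 := by
    have hbound := abs_lt.mp (abs_nat_mul_arctan_lt_pi_div_two hz)
    exact_mod_cast (Real.cos_pos_of_mem_Ioo hbound).ne'
  have htan : Complex.tan (Real.arctan z) = z := by rw [← Complex.ofReal_tan, Real.tan_arctan]
  set c : ℂ := Complex.I * z
  set r := (1 - c) / (1 + c)
  have hb : 1 + c ≠ 0 := fun h => by simpa [c] using congrArg Complex.re h
  have hr : (1 + c) * r = 1 - c := mul_div_cancel₀ _ hb
  have hpow := htan ▸ Complex.div_pow_mul_cos_add_sin_mul_I hθ n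
  have hrn := Complex.one_add_ne_zero_of_mul_cos_add_sin_mul_I hnθ hpow
  have htan_eq := Complex.I_mul_tan_eq_of_mul_cos_add_sin_mul_I hnθ hpow
  have hM :
      (1 : Matrix (Fin n) (Fin n) ℂ) - (z : ℂ) • B n = 1 + c • Matrix.signMatrix n := by
    simp [B_eq_neg_I_smul_signMatrix, smul_smul, sub_eq_add_neg, c, mul_comm]
  rw [hM]
  refine ⟨Matrix.isUnit_one_add_smul_signMatrix hb hr hrn, ?_⟩
  have htrace := Matrix.mul_trace_allOnes_mul_inv_one_add_smul_signMatrix hb hr hrn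
  rw [← Complex.ofReal_natCast, ← Complex.ofReal_mul, ← Complex.ofReal_tan] at htan_eq
  apply mul_left_cancel₀ Complex.I_ne_zero
  rw [htan_eq, ← htrace, ← mul_assoc]
  rfl

theorem stmt_9 (n : ℕ) (hn : 1 ≤ n) (z : ℝ) (hz : |z| < Real.tan (Real.pi / (2 * n))) :
    IsUnit ((1 : Matrix (Fin n) (Fin n) ℂ) - (z : ℂ) • B n) ∧
    (z : ℂ) * Matrix.trace (J n * ((1 : Matrix (Fin n) (Fin n) ℂ) - (z : ℂ) • B n)⁻¹) =
      (Real.tan (n * Real.arctan z) : ℂ) :=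
  stmt_9_general n z hz
end

section
/- Define d_{n,m} = Tr(J_n · B_n^{2m}) for natural numbers n ≥ 1 and m ≥ 0. Then d_{n,0} = n for all n ≥ 1, d_{1,m} = 0 for all m ≥ 1, and for all n ≥ 2 and m ≥ 1 one has d_{n,m} = d_{n−1,m} + Σ_{k=0}^{m−1} d_{n−1,k} · d_{n,m−k−1}. -/
/-- `d n m = Tr(J_n · B_n^{2m})`. -/
noncomputable def d (n m : ℕ) : ℂ := Matrix.trace (J n * B n ^ (2 * m))

/-!
Write `B_{p+1}^k 1` as `(y_k, s_k)`, splitting off the last coordinate. Since `B_{p+1}` is `B_p`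
bordered by a column of `i`'s and a row of `-i`'s, `y_{k+1} = B_p y_k + i s_k 1` and
`s_{k+1} = -i 1ᵀ y_k`; solving the first recursion writes `1ᵀ y_k` as a convolution of the `s_j`
with the moments `1ᵀ B_p^j 1`. Both matrices are skew-symmetric, so `1ᵀ B^k 1 = 0` for odd `k`, and
eliminating the odd-indexed `s_j` leaves a recurrence between the even moments
`d_{n,m} = Tr(J_n B_n^{2m}) = 1ᵀ B_n^{2m} 1`.
-/

open Finset Complex
open scoped Matrix

namespace Matrix

theorem dotProduct_pow_mulVec_eq_zero_of_odd {n R : Type*} [Fintype n] [DecidableEq n]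
    [CommRing R] [NoZeroDivisors R] [CharZero R] {M : Matrix n n R} (hM : Mᵀ = -M)
    (v : n → R) {k : ℕ} (hk : Odd k) : v ⬝ᵥ (M ^ k) *ᵥ v = 0 := by
  have hneg : (M ^ k)ᵀ = -M ^ k := by rw [transpose_pow, hM, hk.neg_pow]
  rw [← CharZero.eq_neg_self_iff]
  calc v ⬝ᵥ (M ^ k) *ᵥ v = (M ^ k)ᵀ *ᵥ v ⬝ᵥ v := by rw [dotProduct_mulVec, mulVec_transpose]
    _ = -(v ⬝ᵥ (M ^ k) *ᵥ v) := by rw [hneg, neg_mulVec, neg_dotProduct, dotProduct_comm]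

theorem eq_pow_mulVec_add_sum_of_succ {n R : Type*} [Fintype n] [DecidableEq n]
    [CommSemiring R] (M : Matrix n n R) {y f : ℕ → n → R}
    (hy : ∀ k, y (k + 1) = M *ᵥ y k + f k) (k : ℕ) :
    y k = (M ^ k) *ᵥ y 0 + ∑ j ∈ range k, (M ^ (k - 1 - j)) *ᵥ f j := by
  induction k with
  | zero => simp
  | succ k ih =>
    rw [hy, ih, mulVec_add, mulVec_mulVec, ← pow_succ', mulVec_sum, sum_range_succ, add_assoc]
    congr 2
    · refine sum_congr rfl fun j hj => ?_
      rw [mulVec_mulVec, ← pow_succ', show k - 1 - j + 1 = k + 1 - 1 - j by grind]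
    · simp

end Matrix

theorem Finset.sum_range_two_mul {M : Type*} [AddCommMonoid M] (f : ℕ → M) (m : ℕ) :
    ∑ j ∈ range (2 * m), f j = ∑ l ∈ range m, (f (2 * l) + f (2 * l + 1)) := by
  induction m with
  | zero => simp
  | succ m ih => rw [Nat.mul_succ, sum_range_succ, sum_range_succ, sum_range_succ, ih, add_assoc]

theorem one_dotProduct_eq_init_add_last {R : Type*} [NonAssocSemiring R] {n : ℕ}
    (x : Fin (n + 1) → R) : 1 ⬝ᵥ x = 1 ⬝ᵥ Fin.init x + x (Fin.last n) := by
  simp [dotProduct, Fin.sum_univ_castSucc, Fin.init]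

theorem trace_J_mul (n : ℕ) (M : Matrix (Fin n) (Fin n) ℂ) :
    (J n * M).trace = 1 ⬝ᵥ M *ᵥ 1 := by
  have hJ : J n = Matrix.vecMulVec 1 1 := by ext; simp [J, Matrix.vecMulVec]
  rw [hJ, Matrix.vecMulVec_mul, Matrix.trace_vecMulVec, dotProduct_comm, Matrix.dotProduct_mulVec]

theorem B_transpose (n : ℕ) : (B n)ᵀ = -B n := by
  ext j k
  simp only [Matrix.transpose_apply, Matrix.neg_apply, B, Matrix.of_apply]
  rcases lt_trichotomy j k with hjk | rfl | hjk
  · simp [hjk, hjk.not_gt]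
  · simp
  · simp [hjk, hjk.not_gt]

/-- Applied with `a k = 1ᵀ B_{p+1}^k 1`, `b k = 1ᵀ B_p^k 1` and `s k` the last coordinate of
`B_{p+1}^k 1`. -/
theorem even_recurrence_of_bordering {R : Type*} [CommRing R] {ι : R} (hι : ι * ι = -1)
    {a b s : ℕ → R} (ha : ∀ k, Odd k → a k = 0) (hb : ∀ k, Odd k → b k = 0)
    (hs₀ : s 0 = 1) (hs : ∀ k, s (k + 1) = -ι * (a k - s k))
    (hconv : ∀ k, a k - s k = b k + ∑ j ∈ range k, ι * s j * b (k - 1 - j)) (m : ℕ) :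
    a (2 * (m + 1)) = b (2 * (m + 1)) + ∑ l ∈ range (m + 1), a (2 * l) * b (2 * (m - l)) := by
  have hs_odd (l : ℕ) : ι * s (2 * l + 1) = a (2 * l) - s (2 * l) := by
    rw [hs]; linear_combination (s (2 * l) - a (2 * l)) * hι
  have hs_even (l : ℕ) : s (2 * l + 2) = a (2 * l) - s (2 * l) := by
    rw [hs (2 * l + 1), ha (2 * l + 1) (odd_two_mul_add_one l), ← hs_odd]; ring
  have ht_rec (m : ℕ) : a (2 * m) - s (2 * m) =
      b (2 * m) + ∑ l ∈ range m, (a (2 * l) - s (2 * l)) * b (2 * (m - 1 - l)) := by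
    rw [hconv, sum_range_two_mul]
    congr 1
    refine sum_congr rfl fun l hl => ?_
    have hl : l < m := mem_range.mp hl
    rw [hb _ ⟨m - 1 - l, by omega⟩, ← hs_odd,
      show 2 * m - 1 - (2 * l + 1) = 2 * (m - 1 - l) by omega]
    ring
  have ht_conv (m : ℕ) :
      a (2 * m) - s (2 * m) = ∑ l ∈ range (m + 1), s (2 * l) * b (2 * (m - l)) := by
    rw [ht_rec, sum_range_succ', mul_zero, hs₀, one_mul, Nat.sub_zero, add_comm]
    congr 1
    refine sum_congr rfl fun l hl => ?_
    rw [mul_add_one, hs_even, Nat.sub_sub, add_comm 1 l]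
  calc a (2 * (m + 1)) = (a (2 * (m + 1)) - s (2 * (m + 1))) + s (2 * m + 2) := by ring_nf
    _ = b (2 * (m + 1)) +
          ∑ l ∈ range (m + 1), (a (2 * l) - s (2 * l) + s (2 * l)) * b (2 * (m - l)) := by
      rw [ht_rec, hs_even, ht_conv, add_assoc, Nat.add_sub_cancel, ← sum_add_distrib]
      simp only [add_mul]
    _ = _ := by simp only [sub_add_cancel]

section Bordering

variable (p : ℕ)

theorem B_succ_mulVec_castSucc (x : Fin (p + 1) → ℂ) (j : Fin p) :
    (B (p + 1) *ᵥ x) j.castSucc = (B p *ᵥ Fin.init x) j + I * x (Fin.last p) := by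
  simp [Matrix.mulVec, dotProduct, Fin.sum_univ_castSucc, B, Fin.init, Fin.castSucc_lt_last]

theorem B_succ_mulVec_last (x : Fin (p + 1) → ℂ) :
    (B (p + 1) *ᵥ x) (Fin.last p) = -I * ∑ j, Fin.init x j := by
  simp [Matrix.mulVec, dotProduct, Fin.sum_univ_castSucc, B, Fin.init, mul_sum,
    fun i : Fin p => (Fin.castSucc_lt_last i).not_gt]

theorem init_B_succ_pow_mulVec_one (k : ℕ) :
    Fin.init (B (p + 1) ^ k *ᵥ 1) = B p ^ k *ᵥ 1 +
      ∑ j ∈ range k, (I * (B (p + 1) ^ j *ᵥ 1) (Fin.last p)) • B p ^ (k - 1 - j) *ᵥ 1 := by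
  have hstep (k : ℕ) : Fin.init (B (p + 1) ^ (k + 1) *ᵥ 1) =
      B p *ᵥ Fin.init (B (p + 1) ^ k *ᵥ 1) + (I * (B (p + 1) ^ k *ᵥ 1) (Fin.last p)) • 1 := by
    ext j
    rw [pow_succ', ← Matrix.mulVec_mulVec]
    simp [Fin.init, B_succ_mulVec_castSucc]
  rw [Matrix.eq_pow_mulVec_add_sum_of_succ (B p)
    (y := fun k => Fin.init (B (p + 1) ^ k *ᵥ 1)) hstep k]
  simp only [pow_zero, Matrix.one_mulVec, Matrix.mulVec_smul]
  rfl

theorem one_dotProduct_B_succ_pow_two_mul (m : ℕ) :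
    1 ⬝ᵥ B (p + 1) ^ (2 * (m + 1)) *ᵥ 1 = 1 ⬝ᵥ B p ^ (2 * (m + 1)) *ᵥ 1 +
      ∑ l ∈ range (m + 1), (1 ⬝ᵥ B (p + 1) ^ (2 * l) *ᵥ 1) * (1 ⬝ᵥ B p ^ (2 * (m - l)) *ᵥ 1) := by
  refine even_recurrence_of_bordering I_mul_I
    (fun k hk => Matrix.dotProduct_pow_mulVec_eq_zero_of_odd (B_transpose _) _ hk)
    (fun k hk => Matrix.dotProduct_pow_mulVec_eq_zero_of_odd (B_transpose _) _ hk)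
    (s := fun k => (B (p + 1) ^ k *ᵥ 1) (Fin.last p)) (by simp) (fun k => ?_) (fun k => ?_) m
  · rw [one_dotProduct_eq_init_add_last, add_sub_cancel_right, pow_succ', ← Matrix.mulVec_mulVec,
      B_succ_mulVec_last]
    simp [dotProduct]
  · rw [one_dotProduct_eq_init_add_last, add_sub_cancel_right, init_B_succ_pow_mulVec_one,
      dotProduct_add, dotProduct_sum]
    simp [dotProduct_smul, mul_comm]

end Bordering

theorem d_eq_one_dotProduct (n m : ℕ) : d n m = 1 ⬝ᵥ B n ^ (2 * m) *ᵥ 1 := trace_J_mul _ _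

theorem d_succ_succ (p m : ℕ) :
    d (p + 1) (m + 1) = d p (m + 1) + ∑ k ∈ range (m + 1), d p k * d (p + 1) (m - k) := by
  simp only [d_eq_one_dotProduct]
  rw [one_dotProduct_B_succ_pow_two_mul, ← sum_range_reflect]
  refine congrArg _ (sum_congr rfl fun k hk => ?_)
  rw [Nat.add_sub_cancel, Nat.sub_sub_self (Nat.le_of_lt_succ (mem_range.mp hk)), mul_comm]

theorem stmt_10 :
    (∀ n : ℕ, 1 ≤ n → d n 0 = n) ∧
    (∀ m : ℕ, 1 ≤ m → d 1 m = 0) ∧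
    ∀ n m : ℕ, 2 ≤ n → 1 ≤ m →
      d n m = d (n - 1) m + ∑ k ∈ Finset.range m, d (n - 1) k * d n (m - k - 1) := by
  refine ⟨fun n _ => by simp [d_eq_one_dotProduct], fun m hm => ?_, fun n m hn hm => ?_⟩
  · have hB : B 1 = 0 := by ext j k; simp [B, Subsingleton.elim j k]
    rw [d_eq_one_dotProduct, hB, zero_pow (by omega)]
    simp
  · obtain ⟨p, rfl⟩ : ∃ p, n = p + 2 := ⟨n - 2, by omega⟩
    obtain ⟨m, rfl⟩ : ∃ m', m = m' + 1 := ⟨m - 1, by omega⟩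
    simpa [Nat.sub_right_comm _ _ 1] using d_succ_succ (p + 1) m
end

section
/- For every natural number m ≥ 1 and every real number x, one has x^m = (1/(m−1)!) · Σ_{k=1}^{m} A_m^{(k)} · P_{k−1}(x) + ε_m, where ε_m = (−1)^{m/2} if m is even and ε_m = 0 if m is odd. -/
/-- The derivative polynomials of the tangent function:
`P 0 = X`, `P (n+1) = (1 + X²) · (P n)'`. -/
noncomputable def P : ℕ → Polynomial ℝ
  | 0 => Polynomial.X
  | n + 1 => (1 + Polynomial.X ^ 2) * Polynomial.derivative (P n)

/-- The arctangent numbers `A n k`: the Taylor coefficients (with respect to the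
exponential generating function) of `(arctan z)^k / k!`, i.e.
`(arctan z)^k / k! = Σ_{n ≥ k} A n k · zⁿ/n!`. -/
noncomputable def A (n k : ℕ) : ℝ :=
  iteratedDeriv n (fun z : ℝ => Real.arctan z ^ k / (Nat.factorial k)) 0

/-!
With `f k = arctan ^ k / k!` one has `(1 + z²) · (f (k+1))' = f k`, and Leibniz's rule at `0`
turns this into the recurrence `A (n+1) (k+1) = A n k - n (n-1) A (n-1) (k+1)`. Together with
`P (j+1) = (1 + X²) · (P j)'` it shows that `S m = ∑ₖ A m k · P (k-1)` satisfies
`S (n+3) = (1 + X²) · (S (n+2))' - (n+2)(n+1) · S (n+1)`, so the closed form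
`S m = (m-1)! · (X ^ m - ε m)` follows by a two-step induction, the constants `ε = evenSign`
obeying `ε (n+3) = -ε (n+1)`.
-/

open Polynomial

theorem iteratedDeriv_one_add_sq_mul_zero {𝕜 : Type*} [NontriviallyNormedField 𝕜] {g : 𝕜 → 𝕜}
    (n : ℕ) (hg : ContDiffAt 𝕜 n g 0) :
    iteratedDeriv n (fun w => (1 + w ^ 2) * g w) 0 =
      iteratedDeriv n g 0 + n * (n - 1) * iteratedDeriv (n - 2) g 0 := by
  simp_rw [add_mul, one_mul]
  rw [iteratedDeriv_fun_add hg (by fun_prop), iteratedDeriv_fun_mul (by fun_prop) hg]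
  simp only [iteratedDeriv_fun_pow_zero]
  rw [Finset.sum_eq_single 2 (fun i _ hi => by simp [hi])
      (fun h => by simp [Nat.choose_eq_zero_of_lt (show n < 2 by simpa using h)])]
  rcases n with _ | _ | n
  · simp
  · simp
  · have h : (n + 2).choose 2 * 2 = (n + 2) * (n + 1) := by
      rw [Nat.choose_two_right, Nat.div_mul_cancel (Nat.two_dvd_mul_sub_one _)]; rfl
    simp only [Nat.factorial_two, if_true]
    rw [← Nat.cast_mul, h]
    push_cast
    ring

noncomputable def arctanPowDivFactorial (k : ℕ) (z : ℝ) : ℝ :=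
  Real.arctan z ^ k / k.factorial

lemma A_eq_iteratedDeriv (n k : ℕ) : A n k = iteratedDeriv n (arctanPowDivFactorial k) 0 := rfl

lemma contDiff_arctanPowDivFactorial (k : ℕ) {n : WithTop ℕ∞} :
    ContDiff ℝ n (arctanPowDivFactorial k) :=
  (Real.contDiff_arctan.pow k).div_const _

lemma one_add_sq_mul_deriv_arctanPowDivFactorial_succ (k : ℕ) (z : ℝ) :
    (1 + z ^ 2) * deriv (arctanPowDivFactorial (k + 1)) z = arctanPowDivFactorial k z := by
  have hderiv := ((Real.hasDerivAt_arctan z).fun_pow (k + 1)).div_const ((k + 1).factorial : ℝ)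
  unfold arctanPowDivFactorial
  rw [hderiv.deriv, Nat.factorial_succ]
  have : (1 : ℝ) + z ^ 2 ≠ 0 := by positivity
  push_cast
  field_simp

lemma A_succ_succ (n k : ℕ) :
    A (n + 1) (k + 1) = A n k - n * (n - 1) * A (n - 1) (k + 1) := by
  have h := iteratedDeriv_one_add_sq_mul_zero n
    (contDiff_arctanPowDivFactorial (k + 1) (n := n + 1)).deriv'.contDiffAt
  simp only [one_add_sq_mul_deriv_arctanPowDivFactorial_succ, ← iteratedDeriv_succ'] at h
  simp only [A_eq_iteratedDeriv, h]
  rcases n with _ | _ | n <;> simp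

lemma A_zero_zero : A 0 0 = 1 := by simp [A]

lemma A_succ_zero (n : ℕ) : A (n + 1) 0 = 0 := by simp [A, iteratedDeriv_const]

lemma A_zero_succ (k : ℕ) : A 0 (k + 1) = 0 := by simp [A]

lemma A_eq_zero_of_lt {n k : ℕ} (h : n < k) : A n k = 0 := by
  induction n using Nat.strong_induction_on generalizing k with
  | _ n ih =>
    obtain ⟨k, rfl⟩ : ∃ j, k = j + 1 := ⟨k - 1, by omega⟩
    rcases n with _ | n
    · exact A_zero_succ k
    · rw [A_succ_succ, ih n (by omega) (by omega), ih (n - 1) (by omega) (by omega)]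
      ring

noncomputable def arctanDerivPolySum (m : ℕ) : ℝ[X] :=
  ∑ j ∈ Finset.range m, C (A m (j + 1)) * P j

noncomputable def evenSign (m : ℕ) : ℝ :=
  if Even m then (-1) ^ (m / 2) else 0

lemma evenSign_add_two (n : ℕ) : evenSign (n + 2) = -evenSign n := by
  simp only [evenSign, Nat.even_add, even_two, iff_true, Nat.add_div_right n two_pos, pow_succ]
  split_ifs <;> ring

lemma sum_range_eq_arctanDerivPolySum_of_le {m N : ℕ} (h : m ≤ N) :
    ∑ j ∈ Finset.range N, C (A m (j + 1)) * P j = arctanDerivPolySum m :=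
  (Finset.sum_subset (Finset.range_subset_range.mpr h) fun j _ hj => by
    rw [A_eq_zero_of_lt (by simpa using hj), map_zero, zero_mul]).symm

lemma arctanDerivPolySum_add_three (n : ℕ) :
    arctanDerivPolySum (n + 3) = (1 + X ^ 2) * derivative (arctanDerivPolySum (n + 2)) -
      ((n + 2) * (n + 1) : ℝ[X]) * arctanDerivPolySum (n + 1) := by
  have hsplit : arctanDerivPolySum (n + 3) = ∑ j ∈ Finset.range (n + 3), C (A (n + 2) j) * P j -
      ((n + 2) * (n + 1) : ℝ[X]) * ∑ j ∈ Finset.range (n + 3), C (A (n + 1) (j + 1)) * P j := by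
    rw [arctanDerivPolySum, Finset.mul_sum, ← Finset.sum_sub_distrib]
    refine Finset.sum_congr rfl fun j _ => ?_
    rw [A_succ_succ]
    simp only [map_sub, map_mul, map_natCast, map_one]
    push_cast
    ring
  have hderiv : ∑ j ∈ Finset.range (n + 3), C (A (n + 2) j) * P j =
      (1 + X ^ 2) * derivative (arctanDerivPolySum (n + 2)) := by
    rw [Finset.sum_range_succ', A_succ_zero, arctanDerivPolySum, map_sum, Finset.mul_sum]
    simp only [P, derivative_C_mul, map_zero, zero_mul, add_zero]
    refine Finset.sum_congr rfl fun j _ => by ring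
  rw [hsplit, hderiv, sum_range_eq_arctanDerivPolySum_of_le (by omega)]

lemma arctanDerivPolySum_succ : ∀ m : ℕ,
    arctanDerivPolySum (m + 1) = (m.factorial : ℝ[X]) * (X ^ (m + 1) - C (evenSign (m + 1)))
  | 0 => by simp [arctanDerivPolySum, evenSign, P, A_succ_succ, A_zero_zero]
  | 1 => by
    simp [arctanDerivPolySum, Finset.sum_range_succ, evenSign, P, A_succ_succ, A_zero_zero, A_succ_zero]
    ring
  | n + 2 => by
    rw [arctanDerivPolySum_add_three, arctanDerivPolySum_succ n, arctanDerivPolySum_succ (n + 1),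
      evenSign_add_two (n + 1)]
    simp only [derivative_natCast_mul, derivative_sub, derivative_X_pow, derivative_C, sub_zero,
      Nat.factorial_succ, map_natCast, map_neg]
    push_cast
    ring

theorem stmt_13 (m : ℕ) (hm : 1 ≤ m) (x : ℝ) :
    x ^ m =
      (1 / (Nat.factorial (m - 1) : ℝ)) *
          (∑ k ∈ Finset.Icc 1 m, A m k * (P (k - 1)).eval x) +
        (if Even m then (-1 : ℝ) ^ (m / 2) else 0) := by
  obtain ⟨m, rfl⟩ : ∃ n, m = n + 1 := ⟨m - 1, by omega⟩
  have hsum : ∑ k ∈ Finset.Icc 1 (m + 1), A (m + 1) k * (P (k - 1)).eval x =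
      (arctanDerivPolySum (m + 1)).eval x := by
    rw [arctanDerivPolySum, eval_finsetSum, ← Finset.Ico_add_one_right_eq_Icc,
      Finset.sum_Ico_eq_sum_range]
    simp [add_comm 1]
  rw [hsum, arctanDerivPolySum_succ, Nat.add_sub_cancel]
  change _ = _ + evenSign (m + 1)
  have : (m.factorial : ℝ) ≠ 0 := by positivity
  simp only [one_div, eval_mul, eval_natCast, eval_sub, eval_pow, eval_X, eval_C]
  field_simp
  ring
end
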